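/- arXiv:2602.01907 — 3 statements merged into one kernel-verified Lean document; each statement's English description precedes it below -/
import Mathlib

section
/- Let Ω ⊆ ℝ^{n+1} be an open axially symmetric set and let f : Ω → ℝ_n be continuous. Then f is a slice function on Ω if and only if, for every α ∈ ℝ and β > 0 such that the sphere S_{α,β} = {(α, y̲) ∈ ℝ^{n+1} : ‖y̲‖ = β} is contained in Ω, both functions x ↦ ½(f(x) + f(x^c)) and x ↦ ½(x̲·f(x) − x̲·f(x^c)) are constant on S_{α,β}. -/
noncomputable section

open scoped BigOperators

namespace Dunkl

/-! ### An ℓ¹ norm on an arbitrary real vector space, via a Hamel basis -/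

variable {ι V : Type*} [AddCommGroup V] [Module ℝ V]

def l1fun (b : Module.Basis ι ℝ V) (v : V) : ℝ := ∑ a ∈ (b.repr v).support, |b.repr v a|

lemma l1fun_eq_sum (b : Module.Basis ι ℝ V) (v : V) {s : Finset ι} (hs : (b.repr v).support ⊆ s) :
    l1fun b v = ∑ a ∈ s, |b.repr v a| := by
  unfold l1fun
  apply Finset.sum_subset hs
  intro a _ ha
  simp [Finsupp.notMem_support_iff.mp ha]

def l1AddGroupNorm (b : Module.Basis ι ℝ V) : AddGroupNorm V where
  toFun := l1fun b
  map_zero' := by simp [l1fun]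
  add_le' := by
    intro x y
    classical
    set s := (b.repr x).support ∪ (b.repr y).support with hs
    have hxy : (b.repr (x + y)).support ⊆ s := by
      rw [map_add]; exact Finsupp.support_add
    calc l1fun b (x + y) = ∑ a ∈ s, |b.repr (x + y) a| := l1fun_eq_sum b _ hxy
      _ ≤ ∑ a ∈ s, (|b.repr x a| + |b.repr y a|) := by
          refine Finset.sum_le_sum fun a _ => ?_
          rw [map_add]
          exact abs_add_le _ _
      _ = (∑ a ∈ s, |b.repr x a|) + ∑ a ∈ s, |b.repr y a| := Finset.sum_add_distrib
      _ = l1fun b x + l1fun b y := by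
          rw [← l1fun_eq_sum b x Finset.subset_union_left,
            ← l1fun_eq_sum b y Finset.subset_union_right]
  neg' := by
    intro x
    simp [l1fun, Finsupp.support_neg]
  eq_zero_of_map_eq_zero' := by
    intro x hx
    by_contra hx0
    have hsupp : (b.repr x).support.Nonempty := by
      rw [Finsupp.support_nonempty_iff]
      simpa using hx0
    obtain ⟨a, ha⟩ := hsupp
    have h1 : |b.repr x a| = 0 := by
      have := (Finset.sum_eq_zero_iff_of_nonneg
        (fun i _ => abs_nonneg (b.repr x i))).mp hx a ha
      exact this
    exact Finsupp.mem_support_iff.mp ha (abs_eq_zero.mp h1)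

/-! ### The Clifford algebra ℝ_n = Cl(0,n) -/

def Qneg (n : ℕ) : QuadraticForm ℝ (Fin n → ℝ) :=
  QuadraticMap.weightedSumSquares ℝ (fun _ : Fin n => (-1 : ℝ))

/-- The real Clifford algebra `Cl(0,n)`. -/
abbrev Cl (n : ℕ) : Type := CliffordAlgebra (Qneg n)

instance (n : ℕ) : NormedAddCommGroup (Cl n) :=
  AddGroupNorm.toNormedAddCommGroup (l1AddGroupNorm (Module.Basis.ofVectorSpace ℝ (Cl n)))

lemma Cl.norm_def (n : ℕ) (v : Cl n) :
    ‖v‖ = l1fun (Module.Basis.ofVectorSpace ℝ (Cl n)) v := rfl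

instance (n : ℕ) : NormedSpace ℝ (Cl n) where
  norm_smul_le := by
    intro c x
    classical
    set b := Module.Basis.ofVectorSpace ℝ (Cl n)
    have hsub : (b.repr (c • x)).support ⊆ (b.repr x).support := by
      rw [map_smul]
      exact Finsupp.support_smul
    rw [Cl.norm_def, Cl.norm_def, l1fun_eq_sum b _ hsub, l1fun]
    rw [Real.norm_eq_abs, Finset.mul_sum]
    refine le_of_eq (Finset.sum_congr rfl fun a _ => ?_)
    rw [map_smul, Finsupp.smul_apply, smul_eq_mul, abs_mul]

/-- The generators `e_1, …, e_n` of `Cl(0,n)`. -/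
def gen {n : ℕ} (i : Fin n) : Cl n := CliffordAlgebra.ι (Qneg n) (Pi.single i 1)


/-! ### Points, paravectors and differential operators -/

/-- Points of `ℝ^{n+1}`, with coordinates `x 0, x 1, …, x n`. -/
abbrev Pt (n : ℕ) : Type := Fin (n+1) → ℝ

variable {n : ℕ}

/-- The imaginary part `x̲ = Σ x_i e_i` of a point, as an element of `Cl(0,n)`. -/
def im (x : Pt n) : Cl n := ∑ i : Fin n, x i.succ • gen i

/-- The paravector `x_0 + Σ x_i e_i` associated to a point of `ℝ^{n+1}`. -/
def par (x : Pt n) : Cl n := algebraMap ℝ (Cl n) (x 0) + im x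

/-- `‖x̲‖² = Σ_{i=1}^n x_i²`. -/
def normSqIm (x : Pt n) : ℝ := ∑ i : Fin n, (x i.succ)^2

/-- `x̲⁻¹ = -x̲/‖x̲‖²` (junk value `0` when `x̲ = 0`). -/
def imInv (x : Pt n) : Cl n := -((normSqIm x)⁻¹ • im x)

/-- The Clifford conjugate `x^c = x_0 - x̲`, as a point of `ℝ^{n+1}`. -/
def conj (x : Pt n) : Pt n := fun t => if t = 0 then x t else -(x t)

/-- The reflection `r_i`, changing the sign of the coordinate `x_i` (`1 ≤ i ≤ n`). -/
def refl (i : Fin n) (x : Pt n) : Pt n := fun t => if t = i.succ then -(x t) else x t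

/-- The partial derivative `∂f/∂x_i` of an `ℝ_n`-valued function. -/
def pd (i : Fin (n+1)) (f : Pt n → Cl n) : Pt n → Cl n :=
  fun x => fderiv ℝ f x (Pi.single i 1)

/-- The Euler operator `𝔼 f = Σ_{i=1}^n x_i ∂_{x_i} f`. -/
def euler (f : Pt n → Cl n) : Pt n → Cl n :=
  fun x => ∑ i : Fin n, x i.succ • pd i.succ f x

/-- The Cauchy-Riemann operator `∂̄f = ∂_{x_0}f + Σ e_i ∂_{x_i} f`. -/
def CRop (f : Pt n → Cl n) : Pt n → Cl n :=
  fun x => pd 0 f x + ∑ i : Fin n, gen i * pd i.succ f x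

/-- `ϑ̄f(x) = ∂_{x_0}f(x) − x̲⁻¹·(𝔼f)(x)`. -/
def thetaBar (f : Pt n → Cl n) : Pt n → Cl n :=
  fun x => pd 0 f x - imInv x * euler f x

/-- The spherical Dirac operator `Γf = -Σ_{i<j} e_i e_j (x_i ∂_{x_j}f − x_j ∂_{x_i}f)`. -/
def sphDirac (f : Pt n → Cl n) : Pt n → Cl n :=
  fun x => -∑ i : Fin n, ∑ j : Fin n,
    if i < j then gen i * (gen j * (x i.succ • pd j.succ f x - x j.succ • pd i.succ f x)) else 0

/-! ### Dunkl operators for the reflection group ℤ₂ⁿ -/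

/-- The Dunkl operator `T_i f(x) = ∂_{x_i}f(x) + (k_i/x_i)(f(x) − f(r_i x))`. -/
def T (k : Fin n → ℝ) (i : Fin n) (f : Pt n → Cl n) : Pt n → Cl n :=
  fun x => pd i.succ f x + (k i / x i.succ) • (f x - f (refl i x))

/-- The Dunkl-Dirac operator `D̲f = Σ e_i T_i f`. -/
def dunklDirac (k : Fin n → ℝ) (f : Pt n → Cl n) : Pt n → Cl n :=
  fun x => ∑ i : Fin n, gen i * T k i f x

/-- The Dunkl-Cauchy-Riemann operator `Df = ∂_{x_0}f + D̲f`. -/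
def dunklCR (k : Fin n → ℝ) (f : Pt n → Cl n) : Pt n → Cl n :=
  fun x => pd 0 f x + dunklDirac k f x

/-- The Dunkl Laplacian `Δ_D f = Σ T_i(T_i f)`. -/
def dunklLap (k : Fin n → ℝ) (f : Pt n → Cl n) : Pt n → Cl n :=
  fun x => ∑ i : Fin n, T k i (T k i f) x

/-- The Casimir operator `S̲f = ½(x̲·(D̲f) − D̲(x̲f) − f)`. -/
def casimir (k : Fin n → ℝ) (f : Pt n → Cl n) : Pt n → Cl n :=
  fun x => (2:ℝ)⁻¹ • (im x * dunklDirac k f x - dunklDirac k (fun y => im y * f y) x - f x)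

/-- The Casimir operator in the form `S̲f = x̲·(D̲f) + 𝔼f`
(valid when `Σ k_i = (1−n)/2`). -/
def scas (k : Fin n → ℝ) (f : Pt n → Cl n) : Pt n → Cl n :=
  fun x => im x * dunklDirac k f x + euler f x

/-- `S̃f = Σ_{i=1}^n k_i (f − f∘r_i)`. -/
def stilde (k : Fin n → ℝ) (f : Pt n → Cl n) : Pt n → Cl n :=
  fun x => ∑ i : Fin n, k i • (f x - f (refl i x))

/-- The spherical value `f_s°(x) = ½(f(x) + f(x^c))`. -/
def sval (f : Pt n → Cl n) : Pt n → Cl n :=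
  fun x => (2:ℝ)⁻¹ • (f x + f (conj x))

/-- `S′f = S̃(f_s°)`. -/
def sprime (k : Fin n → ℝ) (f : Pt n → Cl n) : Pt n → Cl n :=
  stilde k (sval f)

/-- `S″f = S̃((x̲f)_s°)`. -/
def sdprime (k : Fin n → ℝ) (f : Pt n → Cl n) : Pt n → Cl n :=
  stilde k (sval (fun y => im y * f y))

/-! ### Symmetric sets and slice functions -/

/-- A point has all the coordinates `x_1, …, x_n` nonzero. -/
def allNZ (x : Pt n) : Prop := ∀ i : Fin n, x i.succ ≠ 0

/-- A set invariant under all the reflections `r_1, …, r_n`. -/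
def ReflInv (Ω : Set (Pt n)) : Prop := ∀ i : Fin n, ∀ x ∈ Ω, refl i x ∈ Ω

/-- An axially symmetric subset of `ℝ^{n+1}`. -/
def AxSymm (Ω : Set (Pt n)) : Prop :=
  ∀ x ∈ Ω, ∀ y : Pt n, y 0 = x 0 → normSqIm y = normSqIm x → y ∈ Ω

/-- The set `𝕊` of imaginary units of the paravector space. -/
def unitSphere (n : ℕ) : Set (Pt n) := {J | J 0 = 0 ∧ normSqIm J = 1}

/-- The point `α + βJ` of `ℝ^{n+1}`. -/
def ptOf (α β : ℝ) (J : Pt n) : Pt n := fun t => (if t = 0 then α else 0) + β * J t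

/-- The set `D = {(α,β) : α + βJ ∈ Ω for all J ∈ 𝕊}`. -/
def sliceDom (Ω : Set (Pt n)) : Set (ℝ × ℝ) :=
  {p | ∀ J ∈ unitSphere n, ptOf p.1 p.2 J ∈ Ω}

/-- `f` is a slice function on `Ω`. -/
def IsSlice (Ω : Set (Pt n)) (f : Pt n → Cl n) : Prop :=
  ∃ F0 F1 : ℝ × ℝ → Cl n,
    (∀ p ∈ sliceDom Ω, F0 (p.1, -p.2) = F0 p) ∧
    (∀ p ∈ sliceDom Ω, F1 (p.1, -p.2) = -F1 p) ∧
    (∀ p ∈ sliceDom Ω, ∀ J ∈ unitSphere n, f (ptOf p.1 p.2 J) = F0 p + im J * F1 p)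

/-- `f` is a slice function of class `C¹` on `Ω`. -/
def IsSliceC1 (Ω : Set (Pt n)) (f : Pt n → Cl n) : Prop :=
  ∃ F0 F1 : ℝ × ℝ → Cl n,
    ContDiffOn ℝ 1 F0 (sliceDom Ω) ∧ ContDiffOn ℝ 1 F1 (sliceDom Ω) ∧
    (∀ p ∈ sliceDom Ω, F0 (p.1, -p.2) = F0 p) ∧
    (∀ p ∈ sliceDom Ω, F1 (p.1, -p.2) = -F1 p) ∧
    (∀ p ∈ sliceDom Ω, ∀ J ∈ unitSphere n, f (ptOf p.1 p.2 J) = F0 p + im J * F1 p)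

/-- `f` is slice-regular on `Ω`: it is an (inclusive) slice function of class `C¹`
whose inducing stem function satisfies the Cauchy-Riemann equations. -/
def IsSliceReg (Ω : Set (Pt n)) (f : Pt n → Cl n) : Prop :=
  ∃ F0 F1 : ℝ × ℝ → Cl n,
    ContDiffOn ℝ 1 F0 (sliceDom Ω) ∧ ContDiffOn ℝ 1 F1 (sliceDom Ω) ∧
    (∀ p ∈ sliceDom Ω,
      fderivWithin ℝ F0 (sliceDom Ω) p (1, 0) = fderivWithin ℝ F1 (sliceDom Ω) p (0, 1) ∧
      fderivWithin ℝ F0 (sliceDom Ω) p (0, 1) = -(fderivWithin ℝ F1 (sliceDom Ω) p (1, 0))) ∧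
    (∀ p ∈ sliceDom Ω, F0 (p.1, -p.2) = F0 p) ∧
    (∀ p ∈ sliceDom Ω, F1 (p.1, -p.2) = -F1 p) ∧
    (∀ p ∈ sliceDom Ω, ∀ J ∈ unitSphere n, f (ptOf p.1 p.2 J) = F0 p + im J * F1 p)

/-- Polynomial functions `ℝ^{n+1} → ℝ_n`. -/
def IsPolyFun (f : Pt n → Cl n) : Prop :=
  ∃ (s : Finset (Fin (n+1) → ℕ)) (a : (Fin (n+1) → ℕ) → Cl n),
    ∀ x : Pt n, f x = ∑ ν ∈ s, (∏ i : Fin (n+1), x i ^ ν i) • a ν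


/-! ### Intermediate Dunkl-Dirac operators associated with a subset `A ⊆ {1,…,n}` -/

/-- `x̲_A = Σ_{i∈A} x_i e_i`. -/
def imA (A : Finset (Fin n)) (x : Pt n) : Cl n := ∑ i ∈ A, x i.succ • gen i

/-- `𝔼_A f = Σ_{i∈A} x_i ∂_{x_i} f`. -/
def eulerA (A : Finset (Fin n)) (f : Pt n → Cl n) : Pt n → Cl n :=
  fun x => ∑ i ∈ A, x i.succ • pd i.succ f x

/-- `D̲_A f = Σ_{i∈A} e_i T_i f`. -/
def dunklDiracA (k : Fin n → ℝ) (A : Finset (Fin n)) (f : Pt n → Cl n) : Pt n → Cl n :=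
  fun x => ∑ i ∈ A, gen i * T k i f x

/-- `S̲_A f = ½(x̲_A (D̲_A f) − D̲_A(x̲_A f) − f)`. -/
def casimirA (k : Fin n → ℝ) (A : Finset (Fin n)) (f : Pt n → Cl n) : Pt n → Cl n :=
  fun x => (2:ℝ)⁻¹ •
    (imA A x * dunklDiracA k A f x - dunklDiracA k A (fun y => imA A y * f y) x - f x)

/-- `S̲_A f = x̲_A (D̲_A f) + 𝔼_A f` (the form valid for `A`-admissible multiplicities). -/
def scasA (k : Fin n → ℝ) (A : Finset (Fin n)) (f : Pt n → Cl n) : Pt n → Cl n :=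
  fun x => imA A x * dunklDiracA k A f x + eulerA A f x

/-- The composition `r_A` of the reflections `r_i`, `i ∈ A`. -/
def reflA (A : Finset (Fin n)) (x : Pt n) : Pt n :=
  fun t => Fin.cases (x 0) (fun i => if i ∈ A then -(x i.succ) else x i.succ) t

/-- The `A`-spherical value `f°_{s,A}(x) = ½(f(x) + f(r_A x))`. -/
def svalA (A : Finset (Fin n)) (f : Pt n → Cl n) : Pt n → Cl n :=
  fun x => (2:ℝ)⁻¹ • (f x + f (reflA A x))

/-- `S̃_A f = Σ_{i∈A} k_i (f − f∘r_i)`. -/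
def stildeA (k : Fin n → ℝ) (A : Finset (Fin n)) (f : Pt n → Cl n) : Pt n → Cl n :=
  fun x => ∑ i ∈ A, k i • (f x - f (refl i x))

/-- `S′_A f = S̃_A(f°_{s,A})`. -/
def sprimeA (k : Fin n → ℝ) (A : Finset (Fin n)) (f : Pt n → Cl n) : Pt n → Cl n :=
  stildeA k A (svalA A f)

/-- `S″_A f = S̃_A((x̲_A f)°_{s,A})`. -/
def sdprimeA (k : Fin n → ℝ) (A : Finset (Fin n)) (f : Pt n → Cl n) : Pt n → Cl n :=
  stildeA k A (svalA A (fun y => imA A y * f y))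

/-- The multiplicities `(k_i)_{i∈A}` are `A`-admissible: nonpositive on `A`, at most one of
them vanishing, and `Σ_{i∈A} k_i = (1−|A|)/2`. -/
def AdmissibleOn (A : Finset (Fin n)) (k : Fin n → ℝ) : Prop :=
  (∀ i ∈ A, k i ≤ 0) ∧ (∀ i ∈ A, ∀ j ∈ A, k i = 0 → k j = 0 → i = j) ∧
  (∑ i ∈ A, k i = (1 - (A.card : ℝ)) / 2)

/-- The condition `𝒮_A f = 0` on `Ω`:  `S̲_A f` vanishes at every point of `Ω` whose
coordinates `x_i`, `i ∈ A`, are all nonzero, and `S′_A f = S″_A f = 0` on `Ω`. -/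
def SAvanishes (k : Fin n → ℝ) (A : Finset (Fin n)) (Ω : Set (Pt n))
    (f : Pt n → Cl n) : Prop :=
  (∀ x ∈ Ω, (∀ i ∈ A, x i.succ ≠ 0) → scasA k A f x = 0) ∧
  (∀ x ∈ Ω, sprimeA k A f x = 0) ∧
  (∀ x ∈ Ω, sdprimeA k A f x = 0)

/-- An `A`-circular subset of `ℝ^{n+1}`. -/
def ACircular (A : Finset (Fin n)) (Ω : Set (Pt n)) : Prop :=
  ∀ x ∈ Ω, ∀ y : Pt n, y 0 = x 0 → (∀ i : Fin n, i ∉ A → y i.succ = x i.succ) →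
    (∑ i ∈ A, (y i.succ)^2) = (∑ i ∈ A, (x i.succ)^2) → y ∈ Ω

end Dunkl

namespace Dunkl

variable {n : ℕ}

lemma im_eq_iota (x : Pt n) :
    im x = CliffordAlgebra.ι (Qneg n) (fun i => x i.succ) := by
  have h : (fun i => x i.succ) = ∑ i : Fin n, x i.succ • (Pi.single i (1:ℝ) : Fin n → ℝ) := by
    funext j
    simp [Finset.sum_apply, Pi.single_apply]
  rw [im, h, map_sum]
  simp [gen, map_smul]

lemma im_sq (x : Pt n) : im x * im x = algebraMap ℝ (Cl n) (-(normSqIm x)) := by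
  rw [im_eq_iota, CliffordAlgebra.ι_sq_scalar]
  congr 1
  show QuadraticMap.weightedSumSquares ℝ (fun _ : Fin n => (-1:ℝ)) _ = _
  rw [QuadraticMap.weightedSumSquares_apply]
  simp [normSqIm, sq, Finset.sum_neg_distrib]

lemma conj_zero (x : Pt n) : conj x 0 = x 0 := by simp [conj]

lemma conj_succ (x : Pt n) (i : Fin n) : conj x i.succ = -(x i.succ) := by
  simp [conj, Fin.succ_ne_zero]

lemma conj_conj (x : Pt n) : conj (conj x) = x := by
  funext t
  by_cases ht : t = 0 <;> simp [conj, ht]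

lemma im_conj (x : Pt n) : im (conj x) = -(im x) := by
  simp [im, conj_succ, neg_smul, Finset.sum_neg_distrib]

lemma ptOf_succ (α β : ℝ) (J : Pt n) (i : Fin n) :
    ptOf α β J i.succ = β * J i.succ := by
  simp [ptOf, Fin.succ_ne_zero]

lemma ptOf_zero (α β : ℝ) (J : Pt n) : ptOf α β J 0 = α + β * J 0 := by
  simp [ptOf]

lemma im_ptOf (α β : ℝ) (J : Pt n) : im (ptOf α β J) = β • im J := by
  simp [im, ptOf_succ, Finset.smul_sum, mul_smul]

lemma normSqIm_ptOf (α β : ℝ) (J : Pt n) :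
    normSqIm (ptOf α β J) = β ^ 2 * normSqIm J := by
  simp [normSqIm, ptOf_succ, Finset.mul_sum, mul_pow]

lemma normSqIm_negfun (J : Pt n) : normSqIm (fun t => -(J t)) = normSqIm J := by
  simp [normSqIm, neg_sq]

lemma im_negfun (J : Pt n) : im (fun t => -(J t)) = -(im J) := by
  simp [im, neg_smul, Finset.sum_neg_distrib]

lemma sphere_rep {α β : ℝ} (hβ : β ≠ 0) (z : Pt n) (hz0 : z 0 = α)
    (hz2 : normSqIm z = β ^ 2) :
    ∃ J : Pt n, J ∈ unitSphere n ∧ (fun t => -(J t)) ∈ unitSphere n ∧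
      ptOf α β J = z ∧ ptOf α β (fun t => -(J t)) = conj z := by
  set J : Pt n := fun t => if t = 0 then 0 else z t / β with hJdef
  have hJ0 : J 0 = 0 := by simp [hJdef]
  have hJs : ∀ i : Fin n, J i.succ = z i.succ / β := by
    intro i; simp [hJdef, Fin.succ_ne_zero]
  have hnorm : normSqIm J = 1 := by
    have h1 : normSqIm J = normSqIm z / β ^ 2 := by
      simp [normSqIm, hJs, div_pow, Finset.sum_div]
    rw [h1, hz2, div_self (pow_ne_zero 2 hβ)]
  refine ⟨J, ⟨hJ0, hnorm⟩, ⟨by simp [hJ0], by rw [normSqIm_negfun, hnorm]⟩, ?_, ?_⟩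
  · funext t
    rcases Fin.eq_zero_or_eq_succ t with rfl | ⟨i, rfl⟩
    · rw [ptOf_zero, hJ0, hz0]; ring
    · rw [ptOf_succ, hJs, mul_div_cancel₀ _ hβ]
  · funext t
    rcases Fin.eq_zero_or_eq_succ t with rfl | ⟨i, rfl⟩
    · rw [ptOf_zero, conj_zero, hJ0, hz0]; ring
    · rw [ptOf_succ, conj_succ]
      show β * -(J i.succ) = _
      rw [hJs]
      field_simp

end Dunkl

open Dunkl

/-- A continuous function on an open axially symmetric set `Ω ⊆ ℝ^{n+1}` is a
slice function if and only if `½(f(x)+f(x^c))` and `½(x̲ f(x) − x̲ f(x^c))` are constant on every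
sphere `S_{α,β} ⊆ Ω`. -/
theorem statement0 (n : ℕ) (hn : 1 ≤ n) (Ω : Set (Pt n)) (hopen : IsOpen Ω)
    (hax : AxSymm Ω) (f : Pt n → Cl n) (hf : ContinuousOn f Ω) :
    IsSlice Ω f ↔
      ∀ α β : ℝ, 0 < β →
        {x : Pt n | x 0 = α ∧ normSqIm x = β ^ 2} ⊆ Ω →
        ∀ x ∈ {x : Pt n | x 0 = α ∧ normSqIm x = β ^ 2},
          ∀ y ∈ {x : Pt n | x 0 = α ∧ normSqIm x = β ^ 2},
            (2:ℝ)⁻¹ • (f x + f (conj x)) = (2:ℝ)⁻¹ • (f y + f (conj y)) ∧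
            (2:ℝ)⁻¹ • (im x * f x - im x * f (conj x)) =
              (2:ℝ)⁻¹ • (im y * f y - im y * f (conj y)) := by
  constructor
  · rintro ⟨F0, F1, h0, h1, hrep⟩ α β hβ hsub x hx y hy
    have hp : (α, β) ∈ sliceDom Ω := by
      intro J hJ
      apply hsub
      exact ⟨by rw [ptOf_zero, hJ.1, mul_zero, add_zero],
        by rw [normSqIm_ptOf, hJ.2, mul_one]⟩
    have key : ∀ z : Pt n, z 0 = α → normSqIm z = β ^ 2 →
        (2:ℝ)⁻¹ • (f z + f (conj z)) = F0 (α, β) ∧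
        (2:ℝ)⁻¹ • (im z * f z - im z * f (conj z)) = -(β • F1 (α, β)) := by
      intro z hz0 hz2
      obtain ⟨Jz, hJzU, hJzU', hze, hzc⟩ := sphere_rep (ne_of_gt hβ) z hz0 hz2
      have e1 := hrep (α, β) hp Jz hJzU
      have e2 := hrep (α, β) hp _ hJzU'
      rw [hze] at e1
      rw [hzc, im_negfun] at e2
      have himz : im z = β • im Jz := by rw [← hze, im_ptOf]
      have hsq : im Jz * im Jz = -1 := by
        rw [im_sq, hJzU.2]; simp
      constructor
      · rw [e1, e2, neg_mul]
        rw [show F0 (α, β) + im Jz * F1 (α, β) +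
            (F0 (α, β) + -(im Jz * F1 (α, β))) = (2:ℝ) • F0 (α, β) by
          rw [two_smul]; abel]
        rw [smul_smul]
        norm_num
      · have hd : f z - f (conj z) = (2:ℝ) • (im Jz * F1 (α, β)) := by
          rw [e1, e2, neg_mul, two_smul]; abel
        rw [← mul_sub, hd, himz, smul_mul_assoc, mul_smul_comm, ← mul_assoc,
          hsq, neg_one_mul]
        rw [smul_smul, smul_smul, smul_neg]
        rw [show (2:ℝ)⁻¹ * β * 2 = β by ring]
    obtain ⟨k1x, k2x⟩ := key x hx.1 hx.2
    obtain ⟨k1y, k2y⟩ := key y hy.1 hy.2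
    exact ⟨k1x.trans k1y.symm, k2x.trans k2y.symm⟩
  · intro h
    have hn0 : 0 < n := hn
    set i0 : Fin n := ⟨0, hn0⟩ with hi0
    set J0 : Pt n := fun t => if t = i0.succ then (1:ℝ) else 0 with hJ0def
    have hJ00 : J0 0 = 0 := by
      simp [hJ0def, Ne.symm (Fin.succ_ne_zero i0)]
    have hJ0s : ∀ i : Fin n, J0 i.succ = if i = i0 then (1:ℝ) else 0 := by
      intro i; simp [hJ0def, Fin.succ_inj]
    have hJ0U : J0 ∈ unitSphere n := by
      refine ⟨hJ00, ?_⟩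
      simp [normSqIm, hJ0s, apply_ite (fun r : ℝ => r ^ 2)]
    have hcpt : ∀ α β : ℝ, ptOf α (-β) J0 = conj (ptOf α β J0) := by
      intro α β; funext t
      rcases Fin.eq_zero_or_eq_succ t with rfl | ⟨i, rfl⟩
      · rw [ptOf_zero, conj_zero, ptOf_zero, hJ00]; ring
      · rw [ptOf_succ, conj_succ, ptOf_succ]; ring
    refine ⟨fun p => (2:ℝ)⁻¹ • (f (ptOf p.1 p.2 J0) + f (conj (ptOf p.1 p.2 J0))),
      fun p => -(p.2⁻¹ • ((2:ℝ)⁻¹ • (im (ptOf p.1 p.2 J0) * f (ptOf p.1 p.2 J0)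
        - im (ptOf p.1 p.2 J0) * f (conj (ptOf p.1 p.2 J0))))), ?_, ?_, ?_⟩
    · rintro ⟨α, β⟩ hp
      dsimp only
      rw [hcpt, conj_conj, add_comm]
    · rintro ⟨α, β⟩ hp
      dsimp only
      rw [hcpt, conj_conj, im_conj]
      rw [show -(im (ptOf α β J0)) * f (conj (ptOf α β J0)) -
          -(im (ptOf α β J0)) * f (ptOf α β J0) =
          im (ptOf α β J0) * f (ptOf α β J0) -
          im (ptOf α β J0) * f (conj (ptOf α β J0)) by
        rw [neg_mul, neg_mul]; abel]
      rw [inv_neg, neg_smul]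
    · rintro ⟨α, β⟩ hp J hJ
      dsimp only
      by_cases hb : β = 0
      · subst hb
        have him0 : im (ptOf α 0 J0) = 0 := by rw [im_ptOf, zero_smul]
        have hcj : conj (ptOf α 0 J0) = ptOf α 0 J0 := by
          rw [← hcpt, neg_zero]
        have hJJ0 : ptOf α 0 J = ptOf α 0 J0 := by
          funext t
          rcases Fin.eq_zero_or_eq_succ t with rfl | ⟨i, rfl⟩
          · rw [ptOf_zero, ptOf_zero]; ring
          · rw [ptOf_succ, ptOf_succ]; ring
        rw [hJJ0, him0, hcj, zero_mul, sub_self, smul_zero, smul_zero, neg_zero,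
          mul_zero, add_zero]
        rw [show f (ptOf α 0 J0) + f (ptOf α 0 J0) = (2:ℝ) • f (ptOf α 0 J0) from
          (two_smul ℝ _).symm, smul_smul]
        norm_num
      · have hsub : {x : Pt n | x 0 = α ∧ normSqIm x = |β| ^ 2} ⊆ Ω := by
          intro z hz
          obtain ⟨J', hJ'U, _, hJ'z, _⟩ :=
            sphere_rep hb z hz.1 (by rw [hz.2, sq_abs])
          rw [← hJ'z]; exact hp J' hJ'U
        have hmem : ∀ J' : Pt n, J' ∈ unitSphere n →
            ptOf α β J' ∈ {x : Pt n | x 0 = α ∧ normSqIm x = |β| ^ 2} := by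
          intro J' hJ'
          exact ⟨by rw [ptOf_zero, hJ'.1, mul_zero, add_zero],
            by rw [normSqIm_ptOf, hJ'.2, mul_one, sq_abs]⟩
        obtain ⟨e1, e2⟩ := h α |β| (abs_pos.mpr hb) hsub _ (hmem J hJ) _ (hmem J0 hJ0U)
        have hsqJ : im J * im J = -1 := by rw [im_sq, hJ.2]; simp
        have himy : im (ptOf α β J) = β • im J := im_ptOf α β J
        set u := (2:ℝ)⁻¹ • (f (ptOf α β J) - f (conj (ptOf α β J))) with hu
        have hc : (2:ℝ)⁻¹ • (im (ptOf α β J) * f (ptOf α β J) -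
            im (ptOf α β J) * f (conj (ptOf α β J))) = im (ptOf α β J) * u := by
          rw [hu, mul_smul_comm, mul_sub]
        rw [hc] at e2
        rw [← e1, ← e2, himy, smul_mul_assoc, smul_smul,
          inv_mul_cancel₀ hb, one_smul, mul_neg, ← mul_assoc, hsqJ,
          neg_one_mul, neg_neg]
        rw [hu]
        module
end
end

section
/- Let f : ℝ^{n+1} → ℝ_n be a polynomial function such that ϑ̄f(x) = 0 at every x ∈ ℝ^{n+1} with x̲ ≠ 0. Then there exist d ∈ ℕ and a_0, …, a_d ∈ ℝ_n such that f(x) = Σ_{j=0}^d x^j·a_j for every paravector x, where the powers x^j are computed in ℝ_n. -/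
noncomputable section

open scoped BigOperators

open Dunkl

namespace Statement1Aux
open Dunkl

variable {n : ℕ}

abbrev Mu (n : ℕ) := Fin (n+1) →₀ ℕ
abbrev Dm (n : ℕ) := Mu n →₀ Cl n

/-- The monomial function `x ↦ x^ν`. -/
def mono (ν : Mu n) (x : Pt n) : ℝ := ∏ i, x i ^ ν i

def evS (ν : Mu n) : Cl n →ₗ[ℝ] (Pt n → Cl n) where
  toFun a := fun x => mono ν x • a
  map_add' a b := by funext x; simp [smul_add]
  map_smul' r a := by
    funext x
    simp only [RingHom.id_apply, Pi.smul_apply]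
    rw [smul_comm]

/-- Evaluation of a formal polynomial. -/
def Ev : Dm n →ₗ[ℝ] (Pt n → Cl n) := Finsupp.lsum ℝ evS

/-- Multiplication by the variable `X j`. -/
def xm (j : Fin (n+1)) : Dm n →ₗ[ℝ] Dm n :=
  Finsupp.lmapDomain _ ℝ (· + Finsupp.single j 1)

/-- Formal partial derivative. -/
def pdD (j : Fin (n+1)) : Dm n →ₗ[ℝ] Dm n :=
  Finsupp.lsum ℝ fun ν => (ν j : ℝ) • Finsupp.lsingle (ν - Finsupp.single j 1)

/-- Left multiplication by a constant `g : Cl n`. -/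
def clm (g : Cl n) : Dm n →ₗ[ℝ] Dm n :=
  Finsupp.mapRange.linearMap (LinearMap.mulLeft ℝ g)

/-- Left multiplication by `x̲`. -/
def ImD : Dm n →ₗ[ℝ] Dm n := ∑ i : Fin n, clm (gen i) ∘ₗ xm i.succ
/-- The Euler operator. -/
def EuD : Dm n →ₗ[ℝ] Dm n := ∑ i : Fin n, xm i.succ ∘ₗ pdD i.succ
/-- Multiplication by `‖x̲‖²`. -/
def NSD : Dm n →ₗ[ℝ] Dm n := ∑ i : Fin n, xm i.succ ∘ₗ xm i.succ
/-- Left multiplication by the paravector `x`. -/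
def XPD : Dm n →ₗ[ℝ] Dm n := xm 0 + ImD

/-- Total degree of a multi-index. -/
def degF (ν : Mu n) : ℕ := ∑ i, ν i

@[simp] lemma xm_single (j : Fin (n+1)) (ν : Mu n) (a : Cl n) :
    xm j (Finsupp.single ν a) = Finsupp.single (ν + Finsupp.single j 1) a := by
  simp [xm, Finsupp.lmapDomain_apply, Finsupp.mapDomain_single]

@[simp] lemma pdD_single (j : Fin (n+1)) (ν : Mu n) (a : Cl n) :
    pdD j (Finsupp.single ν a)
      = (ν j : ℝ) • Finsupp.single (ν - Finsupp.single j 1) a := by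
  simp [pdD]

@[simp] lemma clm_single (g : Cl n) (ν : Mu n) (a : Cl n) :
    clm g (Finsupp.single ν a) = Finsupp.single ν (g * a) := by
  simp [clm]

@[simp] lemma Ev_single (ν : Mu n) (a : Cl n) (x : Pt n) :
    Ev (Finsupp.single ν a) x = mono ν x • a := by
  show (Finsupp.lsum ℝ evS) (Finsupp.single ν a) x = _
  rw [Finsupp.lsum_single]
  rfl

lemma degF_add_single (ν : Mu n) (j : Fin (n+1)) :
    degF (ν + Finsupp.single j 1) = degF ν + 1 := by
  unfold degF
  rw [Finset.sum_congr rfl (fun i _ => Finsupp.add_apply ν (Finsupp.single j 1) i),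
    Finset.sum_add_distrib]
  congr 1
  simp [Finsupp.single_apply]

lemma degF_tsub (ν : Mu n) (j : Fin (n+1)) (h : ν j ≠ 0) :
    degF (ν - Finsupp.single j 1) + 1 = degF ν := by
  unfold degF
  rw [Finset.sum_congr rfl (fun i _ => Finsupp.tsub_apply ν (Finsupp.single j 1) i)]
  rw [← Finset.add_sum_erase _ _ (Finset.mem_univ j),
    ← Finset.add_sum_erase _ (fun i => ν i) (Finset.mem_univ j)]
  have hs : ∑ i ∈ Finset.univ.erase j, (ν i - Finsupp.single j 1 i)
      = ∑ i ∈ Finset.univ.erase j, ν i := by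
    refine Finset.sum_congr rfl (fun i hi => ?_)
    rw [Finsupp.single_apply, if_neg (Ne.symm (Finset.mem_erase.mp hi).1), Nat.sub_zero]
  rw [hs, Finsupp.single_apply, if_pos rfl]
  omega

lemma mono_add_single (ν : Mu n) (j : Fin (n+1)) (x : Pt n) :
    mono (ν + Finsupp.single j 1) x = x j * mono ν x := by
  unfold mono
  rw [← Finset.mul_prod_erase _ _ (Finset.mem_univ j),
    ← Finset.mul_prod_erase _ (fun i => x i ^ ν i) (Finset.mem_univ j)]
  have hs : ∏ i ∈ Finset.univ.erase j, x i ^ ((ν + Finsupp.single j 1 : Mu n) i)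
      = ∏ i ∈ Finset.univ.erase j, x i ^ ν i := by
    refine Finset.prod_congr rfl fun i hi => ?_
    rw [Finsupp.add_apply, Finsupp.single_apply,
      if_neg (Ne.symm (Finset.mem_erase.mp hi).1), Nat.add_zero]
  rw [hs, Finsupp.add_apply, Finsupp.single_apply, if_pos rfl, pow_succ]
  ring

lemma Ev_xm (j : Fin (n+1)) (d : Dm n) (x : Pt n) :
    Ev (xm j d) x = x j • Ev d x := by
  induction d using Finsupp.induction_linear with
  | zero => simp
  | add f g hf hg => simp only [map_add, Pi.add_apply, hf, hg, smul_add]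
  | single ν a => rw [xm_single, Ev_single, Ev_single, mono_add_single, mul_smul]

lemma Ev_clm (g : Cl n) (d : Dm n) (x : Pt n) :
    Ev (clm g d) x = g * Ev d x := by
  induction d using Finsupp.induction_linear with
  | zero => simp
  | add f g' hf hg => simp only [map_add, Pi.add_apply, hf, hg, mul_add]
  | single ν a => rw [clm_single, Ev_single, Ev_single, mul_smul_comm]

lemma Ev_ImD (d : Dm n) (x : Pt n) : Ev (ImD d) x = im x * Ev d x := by
  rw [ImD, LinearMap.sum_apply, map_sum, Finset.sum_apply, im, Finset.sum_mul]
  refine Finset.sum_congr rfl fun i _ => ?_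
  rw [LinearMap.comp_apply, Ev_clm, Ev_xm, mul_smul_comm, smul_mul_assoc]

lemma Ev_NSD (d : Dm n) (x : Pt n) : Ev (NSD d) x = normSqIm x • Ev d x := by
  rw [NSD, LinearMap.sum_apply, map_sum, Finset.sum_apply, normSqIm, Finset.sum_smul]
  refine Finset.sum_congr rfl fun i _ => ?_
  rw [LinearMap.comp_apply, Ev_xm, Ev_xm, smul_smul, pow_two]

lemma Ev_EuD (d : Dm n) (x : Pt n) :
    Ev (EuD d) x = ∑ i : Fin n, x i.succ • Ev (pdD i.succ d) x := by
  rw [EuD, LinearMap.sum_apply, map_sum, Finset.sum_apply]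
  refine Finset.sum_congr rfl fun i _ => ?_
  rw [LinearMap.comp_apply, Ev_xm]

lemma Ev_XPD (d : Dm n) (x : Pt n) : Ev (XPD d) x = par x * Ev d x := by
  rw [XPD, LinearMap.add_apply, map_add, Pi.add_apply, Ev_xm, Ev_ImD, par, add_mul,
    Algebra.smul_def]

lemma Qneg_apply (v : Fin n → ℝ) : Qneg n v = -∑ t, v t * v t := by
  rw [Qneg, QuadraticMap.weightedSumSquares_apply, ← Finset.sum_neg_distrib]
  exact Finset.sum_congr rfl fun t _ => by rw [smul_eq_mul]; ring

lemma gen_mul_self (i : Fin n) : gen i * gen i = -1 := by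
  rw [gen, CliffordAlgebra.ι_sq_scalar]
  have h1 : ∑ t, (Pi.single i 1 : Fin n → ℝ) t * (Pi.single i 1 : Fin n → ℝ) t = 1 := by
    simp [Pi.single_apply]
  rw [Qneg_apply, h1, map_neg, map_one]

lemma gen_anticomm {i j : Fin n} (h : i ≠ j) : gen i * gen j + gen j * gen i = 0 := by
  rw [gen, gen, CliffordAlgebra.ι_mul_ι_add_swap]
  have hpolar : QuadraticMap.polar (Qneg n) (Pi.single i 1) (Pi.single j 1) = 0 := by
    rw [QuadraticMap.polar]
    rw [Qneg_apply, Qneg_apply, Qneg_apply]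
    have e1 : ∑ t, ((Pi.single i 1 : Fin n → ℝ) + (Pi.single j 1 : Fin n → ℝ)) t * ((Pi.single i 1 : Fin n → ℝ) + (Pi.single j 1 : Fin n → ℝ)) t
        = ∑ t, ((Pi.single i 1 : Fin n → ℝ) t * (Pi.single i 1 : Fin n → ℝ) t
            + ((Pi.single j 1 : Fin n → ℝ) t * (Pi.single j 1 : Fin n → ℝ) t
              + 2 * ((Pi.single i 1 : Fin n → ℝ) t * (Pi.single j 1 : Fin n → ℝ) t))) := by
      refine Finset.sum_congr rfl fun t _ => ?_
      rw [Pi.add_apply]; ring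
    have e2 : ∑ t, (Pi.single i 1 : Fin n → ℝ) t * (Pi.single j 1 : Fin n → ℝ) t = 0 := by
      refine Finset.sum_eq_zero fun t _ => ?_
      rcases eq_or_ne t i with rfl | ht
      · rw [Pi.single_eq_of_ne h, mul_zero]
      · rw [Pi.single_eq_of_ne ht, zero_mul]
    rw [e1, Finset.sum_add_distrib, Finset.sum_add_distrib, ← Finset.mul_sum, e2]
    ring
  rw [hpolar, map_zero]

lemma im_eq_iota (x : Pt n) :
    im x = CliffordAlgebra.ι (Qneg n) (fun i => x i.succ) := by
  have hv : (fun i => x i.succ) = ∑ i : Fin n, x i.succ • (Pi.single i 1 : Fin n → ℝ) := by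
    funext t
    rw [Finset.sum_apply]
    simp [Pi.single_apply]
  rw [im, hv, map_sum]
  refine Finset.sum_congr rfl fun i _ => ?_
  rw [map_smul, gen]

lemma im_mul_im (x : Pt n) :
    im x * im x = algebraMap ℝ (Cl n) (-(normSqIm x)) := by
  rw [im_eq_iota, CliffordAlgebra.ι_sq_scalar, Qneg_apply]
  congr 1
  rw [normSqIm]
  congr 1
  exact Finset.sum_congr rfl fun t _ => (pow_two _).symm

lemma im_mul_cancel {x : Pt n} (hx : normSqIm x ≠ 0) {E : Cl n}
    (h : im x * E = 0) : E = 0 := by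
  have h2 : im x * (im x * E) = 0 := by rw [h, mul_zero]
  rw [← mul_assoc, im_mul_im, ← Algebra.smul_def, smul_eq_zero] at h2
  rcases h2 with h2 | h2
  · exact absurd (neg_eq_zero.mp h2) hx
  · exact h2

/-! Analytic layer -/

lemma hasFDerivAt_coord_pow (j : Fin (n+1)) (k : ℕ) (x : Pt n) :
    HasFDerivAt (fun y : Pt n => y j ^ k)
      (((k : ℝ) * x j ^ (k - 1)) • (ContinuousLinearMap.proj j : Pt n →L[ℝ] ℝ)) x := by
  have h1 : HasDerivAt (fun t : ℝ => t ^ k) ((k : ℝ) * x j ^ (k - 1)) (x j) :=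
    hasDerivAt_pow k (x j)
  have h2 : HasFDerivAt (fun y : Pt n => y j)
      (ContinuousLinearMap.proj j : Pt n →L[ℝ] ℝ) x := hasFDerivAt_apply j x
  have h3 := h1.comp_hasFDerivAt x h2
  exact h3

lemma hasFDerivAt_mono (ν : Mu n) (x : Pt n) :
    HasFDerivAt (fun y : Pt n => ∏ i : Fin (n+1), y i ^ ν i)
      (∑ j : Fin (n+1), ((∏ i ∈ Finset.univ.erase j, x i ^ ν i) •
        (((ν j : ℝ) * x j ^ (ν j - 1)) • (ContinuousLinearMap.proj j : Pt n →L[ℝ] ℝ)))) x := by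
  have h := HasFDerivAt.finset_prod (u := (Finset.univ : Finset (Fin (n+1))))
    (g := fun j (y : Pt n) => y j ^ ν j)
    (g' := fun j => ((ν j : ℝ) * x j ^ (ν j - 1)) •
      (ContinuousLinearMap.proj j : Pt n →L[ℝ] ℝ))
    (fun j _ => hasFDerivAt_coord_pow j (ν j) x)
  exact h

lemma Ev_apply_eq_sum (c : Dm n) (y : Pt n) :
    Ev c y = ∑ ν ∈ c.support, mono ν y • c ν := by
  rw [Ev, Finsupp.lsum_apply, Finsupp.sum, Finset.sum_apply]
  rfl

lemma hasFDerivAt_Ev (c : Dm n) (x : Pt n) :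
    HasFDerivAt (Ev c)
      (∑ ν ∈ c.support,
        ((∑ j : Fin (n+1), ((∏ i ∈ Finset.univ.erase j, x i ^ ν i) •
          (((ν j : ℝ) * x j ^ (ν j - 1)) •
            (ContinuousLinearMap.proj j : Pt n →L[ℝ] ℝ)))).smulRight (c ν))) x := by
  have hfun : Ev c = fun y => ∑ ν ∈ c.support, mono ν y • c ν :=
    funext (Ev_apply_eq_sum c)
  rw [hfun]
  exact HasFDerivAt.fun_sum (fun ν _ => (hasFDerivAt_mono ν x).smul_const (c ν))

lemma mono_deriv_eq (ν : Mu n) (j : Fin (n+1)) (x : Pt n) :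
    (∏ i ∈ Finset.univ.erase j, x i ^ ν i) * ((ν j : ℝ) * x j ^ (ν j - 1))
      = (ν j : ℝ) * mono (ν - Finsupp.single j 1) x := by
  rcases Nat.eq_zero_or_pos (ν j) with h | h
  · rw [h]; simp
  · rw [mono, ← Finset.mul_prod_erase _ _ (Finset.mem_univ j)]
    have h1 : ((ν - Finsupp.single j 1 : Mu n) j) = ν j - 1 := by
      rw [Finsupp.tsub_apply, Finsupp.single_apply, if_pos rfl]
    have h2 : ∏ i ∈ Finset.univ.erase j, x i ^ ((ν - Finsupp.single j 1 : Mu n) i)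
        = ∏ i ∈ Finset.univ.erase j, x i ^ ν i := by
      refine Finset.prod_congr rfl fun i hi => ?_
      rw [Finsupp.tsub_apply, Finsupp.single_apply,
        if_neg (Ne.symm (Finset.mem_erase.mp hi).1), Nat.sub_zero]
    rw [h1, h2]
    ring

lemma pd_Ev (j : Fin (n+1)) (c : Dm n) (x : Pt n) :
    pd j (Ev c) x = Ev (pdD j c) x := by
  classical
  rw [pd, (hasFDerivAt_Ev c x).fderiv]
  rw [ContinuousLinearMap.sum_apply]
  have hL : ∀ ν : Mu n,
      ((∑ j' : Fin (n+1), ((∏ i ∈ Finset.univ.erase j', x i ^ ν i) •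
          (((ν j' : ℝ) * x j' ^ (ν j' - 1)) •
            (ContinuousLinearMap.proj j' : Pt n →L[ℝ] ℝ)))).smulRight (c ν))
          (Pi.single j 1)
        = ((ν j : ℝ) * mono (ν - Finsupp.single j 1) x) • c ν := by
    intro ν
    rw [ContinuousLinearMap.smulRight_apply, ContinuousLinearMap.sum_apply]
    rw [← mono_deriv_eq ν j x]
    congr 1
    rw [Finset.sum_eq_single j]
    · rw [ContinuousLinearMap.smul_apply, ContinuousLinearMap.smul_apply,
        ContinuousLinearMap.proj_apply, Pi.single_eq_same, smul_eq_mul, smul_eq_mul, mul_one]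
    · intro j' _ hj'
      rw [ContinuousLinearMap.smul_apply, ContinuousLinearMap.smul_apply,
        ContinuousLinearMap.proj_apply, Pi.single_eq_of_ne hj', smul_eq_mul, smul_eq_mul,
        mul_zero, mul_zero]
    · intro hj; exact absurd (Finset.mem_univ j) hj
  rw [Finset.sum_congr rfl fun ν _ => hL ν]
  -- now the RHS
  rw [pdD, Finsupp.lsum_apply]
  rw [Finsupp.sum, map_sum, Finset.sum_apply]
  refine Finset.sum_congr rfl fun ν _ => ?_
  rw [LinearMap.smul_apply, Finsupp.lsingle_apply, map_smul, Pi.smul_apply, Ev_single, smul_smul]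

lemma continuous_Ev (c : Dm n) : Continuous (Ev c) := by
  have : Ev c = fun y => ∑ ν ∈ c.support, mono ν y • c ν := by
    funext y; exact Ev_apply_eq_sum c y
  rw [this]
  refine continuous_finset_sum _ fun ν _ => Continuous.fun_smul ?_ continuous_const
  exact continuous_finset_prod _ fun i _ => (continuous_apply i).pow _

lemma dense_good (hn : 1 ≤ n) :
    Dense {x : Pt n | ∃ i : Fin n, x i.succ ≠ 0} := by
  intro x
  classical
  have i0 : Fin n := ⟨0, hn⟩
  set sgn : ℝ := if 0 ≤ x i0.succ then 1 else -1 with hsgn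
  refine mem_closure_of_tendsto (f := fun k : ℕ => Function.update x i0.succ
      (x i0.succ + sgn * (1 / ((k:ℝ) + 1)))) (b := Filter.atTop) ?_ ?_
  · rw [tendsto_pi_nhds]
    intro t
    by_cases ht : t = i0.succ
    · have he : (fun k : ℕ => Function.update x i0.succ
          (x i0.succ + sgn * (1 / ((k:ℝ) + 1))) t)
          = fun k : ℕ => x i0.succ + sgn * (1 / ((k:ℝ) + 1)) := by
        funext k; rw [ht, Function.update_self]
      rw [he, ht]
      have h0 : Filter.Tendsto (fun k : ℕ => sgn * (1 / ((k:ℝ) + 1)))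
          Filter.atTop (nhds 0) := by
        have := tendsto_one_div_add_atTop_nhds_zero_nat.const_mul sgn
        simpa using this
      have := h0.const_add (x i0.succ)
      simpa using this
    · have he : (fun k : ℕ => Function.update x i0.succ
          (x i0.succ + sgn * (1 / ((k:ℝ) + 1))) t) = fun _ : ℕ => x t := by
        funext k; rw [Function.update_of_ne ht]
      rw [he]
      exact tendsto_const_nhds
  · refine Filter.Eventually.of_forall fun k => ⟨i0, ?_⟩
    show Function.update x i0.succ (x i0.succ + sgn * (1 / ((k:ℝ) + 1))) i0.succ ≠ 0
    rw [Function.update_self]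
    have hk : (0:ℝ) < 1 / ((k:ℝ) + 1) := by positivity
    rcases le_or_gt 0 (x i0.succ) with h | h
    · rw [hsgn, if_pos h]; nlinarith
    · rw [hsgn, if_neg (not_le.mpr h)]; nlinarith

lemma Ev_zero_of_ae (hn : 1 ≤ n) (c : Dm n)
    (h : ∀ x : Pt n, (∃ i : Fin n, x i.succ ≠ 0) → Ev c x = 0) :
    ∀ x, Ev c x = 0 := by
  have := Continuous.ext_on (dense_good hn) (continuous_Ev c) continuous_const
    (fun x hx => h x hx)
  exact fun x => congrFun this x

lemma Ev_inj (c : Dm n) (h : ∀ x, Ev c x = 0) : c = 0 := by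
  classical
  have key : ∀ (l : Cl n →ₗ[ℝ] ℝ) (ν : Mu n), l (c ν) = 0 := by
    intro l ν
    set p : MvPolynomial (Fin (n+1)) ℝ :=
      ∑ ρ ∈ c.support, MvPolynomial.monomial ρ (l (c ρ)) with hp
    have hev : ∀ x : Fin (n+1) → ℝ, MvPolynomial.eval x p = 0 := by
      intro x
      rw [hp, map_sum]
      have : ∀ ρ ∈ c.support, MvPolynomial.eval x (MvPolynomial.monomial ρ (l (c ρ)))
          = l (mono ρ x • c ρ) := by
        intro ρ _
        rw [MvPolynomial.eval_monomial, map_smul, smul_eq_mul, mono, Finsupp.prod_pow]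
        ring
      rw [Finset.sum_congr rfl this, ← map_sum, ← Ev_apply_eq_sum, h x, map_zero]
    have hp0 : p = 0 := by
      refine MvPolynomial.funext fun x => ?_
      rw [hev x, map_zero]
    by_cases hν : ν ∈ c.support
    · have hc := congrArg (MvPolynomial.coeff ν) hp0
      rw [hp] at hc
      classical
      rw [MvPolynomial.coeff_zero] at hc
      rw [MvPolynomial.coeff_sum] at hc
      have : ∀ ρ ∈ c.support, MvPolynomial.coeff ν (MvPolynomial.monomial ρ (l (c ρ)))
          = if ρ = ν then l (c ρ) else 0 := fun ρ _ => MvPolynomial.coeff_monomial ν ρ _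
      rw [Finset.sum_congr rfl this, Finset.sum_ite_eq' c.support ν _, if_pos hν] at hc
      exact hc
    · rw [Finsupp.notMem_support_iff.mp hν, map_zero]
  ext ν
  set b := Module.Basis.ofVectorSpace ℝ (Cl n)
  have hr : b.repr (c ν) = 0 := by
    ext t
    have := key (b.coord t) ν
    rwa [Module.Basis.coord_apply] at this
  have := b.repr.map_eq_zero_iff.mp hr
  rw [this]
  rfl

/-! Formal algebra layer -/

lemma mu_sub_add_cancel (ν : Mu n) (j : Fin (n+1)) (h : ν j ≠ 0) :
    ν - Finsupp.single j 1 + Finsupp.single j 1 = ν := by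
  ext t
  rw [Finsupp.add_apply, Finsupp.tsub_apply, Finsupp.single_apply]
  by_cases hjt : j = t
  · subst hjt; rw [if_pos rfl]; omega
  · rw [if_neg hjt]; omega

lemma mu_add_sub_cancel (ν : Mu n) (j : Fin (n+1)) :
    ν + Finsupp.single j 1 - Finsupp.single j 1 = ν := by
  ext t
  rw [Finsupp.tsub_apply, Finsupp.add_apply, Finsupp.single_apply]
  by_cases hjt : j = t
  · subst hjt; rw [if_pos rfl]; omega
  · rw [if_neg hjt]; omega

lemma mu_add_sub_comm (ν : Mu n) (j t : Fin (n+1)) (h : ν t ≠ 0) :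
    ν + Finsupp.single j 1 - Finsupp.single t 1
      = ν - Finsupp.single t 1 + Finsupp.single j 1 := by
  ext u
  rw [Finsupp.tsub_apply, Finsupp.add_apply, Finsupp.add_apply, Finsupp.tsub_apply,
    Finsupp.single_apply, Finsupp.single_apply]
  by_cases htu : t = u
  · subst htu
    split_ifs <;> omega
  · split_ifs <;> omega

lemma mu_apply_add_single_ne (ν : Mu n) (j t : Fin (n+1)) (h : j ≠ t) :
    (ν + Finsupp.single j 1 : Mu n) t = ν t := by
  rw [Finsupp.add_apply, Finsupp.single_apply, if_neg h, Nat.add_zero]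

lemma NSD_single (ν : Mu n) (a : Cl n) :
    NSD (Finsupp.single ν a)
      = ∑ i : Fin n, Finsupp.single (ν + Finsupp.single i.succ 1 + Finsupp.single i.succ 1) a := by
  rw [NSD, LinearMap.sum_apply]
  exact Finset.sum_congr rfl fun i _ => by rw [LinearMap.comp_apply, xm_single, xm_single]

lemma ImD_single (ν : Mu n) (a : Cl n) :
    ImD (Finsupp.single ν a)
      = ∑ i : Fin n, Finsupp.single (ν + Finsupp.single i.succ 1) (gen i * a) := by
  rw [ImD, LinearMap.sum_apply]
  exact Finset.sum_congr rfl fun i _ => by rw [LinearMap.comp_apply, xm_single, clm_single]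

lemma EuD_single (ν : Mu n) (a : Cl n) :
    EuD (Finsupp.single ν a)
      = ∑ i : Fin n, (ν i.succ : ℝ) •
          Finsupp.single (ν - Finsupp.single i.succ 1 + Finsupp.single i.succ 1) a := by
  rw [EuD, LinearMap.sum_apply]
  refine Finset.sum_congr rfl fun i _ => ?_
  rw [LinearMap.comp_apply, pdD_single, map_smul, xm_single]

/-- Degree-raising operators commute with degree filtering. -/
lemma filter_raise (L : Dm n →ₗ[ℝ] Dm n)
    (hL : ∀ (ν : Mu n) (a : Cl n), ∀ ρ ∈ (L (Finsupp.single ν a)).support,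
      degF ρ = degF ν + 1)
    (m : ℕ) (c : Dm n) :
    (L c).filter (fun ρ => degF ρ = m + 1) = L (c.filter (fun ν => degF ν = m)) := by
  induction c using Finsupp.induction_linear with
  | zero => rw [map_zero, Finsupp.filter_zero, Finsupp.filter_zero, map_zero]
  | add f g hf hg => rw [map_add, Finsupp.filter_add, hf, hg, Finsupp.filter_add, map_add]
  | single ν a =>
    by_cases hm : degF ν = m
    · rw [Finsupp.filter_single_of_pos (p := fun ν => degF ν = m) (b := a) hm]
      ext ρ
      rw [Finsupp.filter_apply]
      split_ifs with h
      · rfl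
      · by_contra hne
        have hmem : ρ ∈ (L (Finsupp.single ν a)).support :=
          Finsupp.mem_support_iff.mpr fun h0 => hne h0.symm
        exact h (by rw [hL ν a ρ hmem, hm])
    · rw [Finsupp.filter_single_of_neg (p := fun ν => degF ν = m) (b := a) hm, map_zero]
      ext ρ
      rw [Finsupp.filter_apply]
      split_ifs with h
      · show (L (Finsupp.single ν a)) ρ = 0
        rw [← Finsupp.notMem_support_iff]
        intro hmem
        have := hL ν a ρ hmem
        omega
      · rfl

/-- The operator appearing in the regularity equation. -/
def PsiD : Dm n →ₗ[ℝ] Dm n := NSD ∘ₗ pdD 0 + ImD ∘ₗ EuD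

lemma PsiD_raise (ν : Mu n) (a : Cl n) :
    ∀ ρ ∈ (PsiD (Finsupp.single ν a)).support, degF ρ = degF ν + 1 := by
  intro ρ hρ
  rw [PsiD, LinearMap.add_apply, LinearMap.comp_apply, LinearMap.comp_apply] at hρ
  rcases Finset.mem_union.mp (Finsupp.support_add hρ) with h | h
  · -- NSD (pdD 0 (single ν a))
    rw [pdD_single, map_smul] at h
    by_cases h0 : ν 0 = 0
    · rw [h0] at h; simp at h
    · have h1 := Finsupp.support_smul h
      rw [NSD_single] at h1
      obtain ⟨i, _, h2⟩ := Finset.mem_biUnion.mp (Finsupp.support_finset_sum h1)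
      have h3 := Finsupp.support_single_subset h2
      rw [Finset.mem_singleton] at h3
      subst h3
      rw [degF_add_single, degF_add_single]
      have := degF_tsub ν 0 h0
      omega
  · -- ImD (EuD (single ν a))
    rw [EuD_single, map_sum] at h
    obtain ⟨i, _, h2⟩ := Finset.mem_biUnion.mp (Finsupp.support_finset_sum h)
    rw [map_smul] at h2
    by_cases h0 : ν i.succ = 0
    · rw [h0] at h2; simp at h2
    · have h1 := Finsupp.support_smul h2
      rw [ImD_single] at h1
      obtain ⟨j, _, h3⟩ := Finset.mem_biUnion.mp (Finsupp.support_finset_sum h1)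
      have h4 := Finsupp.support_single_subset h3
      rw [Finset.mem_singleton] at h4
      subst h4
      rw [mu_sub_add_cancel ν i.succ h0, degF_add_single]

lemma Eu_single_plus (ν : Mu n) (a : Cl n) :
    EuD (Finsupp.single ν a) + xm 0 (pdD 0 (Finsupp.single ν a))
      = (degF ν : ℝ) • Finsupp.single ν a := by
  rw [EuD_single, pdD_single, map_smul, xm_single]
  have hterm : ∀ i : Fin n,
      (ν i.succ : ℝ) • Finsupp.single (ν - Finsupp.single i.succ 1 + Finsupp.single i.succ 1) a
        = (ν i.succ : ℝ) • Finsupp.single ν a := by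
    intro i
    by_cases h : ν i.succ = 0
    · rw [h]; simp
    · rw [mu_sub_add_cancel ν i.succ h]
  have hterm0 : (ν 0 : ℝ) • Finsupp.single (ν - Finsupp.single 0 1 + Finsupp.single 0 1) a
      = (ν 0 : ℝ) • Finsupp.single ν a := by
    by_cases h : ν 0 = 0
    · rw [h]; simp
    · rw [mu_sub_add_cancel ν 0 h]
  rw [Finset.sum_congr rfl fun i _ => hterm i, hterm0, ← Finset.sum_smul, ← add_smul]
  congr 1
  unfold degF
  rw [Fin.sum_univ_succ]
  push_cast
  ring

lemma EuD_of_hom (m : ℕ) (c : Dm n) (hc : ∀ ν ∈ c.support, degF ν = m) :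
    EuD c + xm 0 (pdD 0 c) = (m : ℝ) • c := by
  have h1 : EuD c + xm 0 (pdD 0 c)
      = ∑ ν ∈ c.support, (degF ν : ℝ) • Finsupp.single ν (c ν) := by
    conv_lhs => rw [← Finsupp.sum_single c, Finsupp.sum]
    rw [map_sum, map_sum, map_sum, ← Finset.sum_add_distrib]
    exact Finset.sum_congr rfl fun ν _ => Eu_single_plus ν (c ν)
  rw [h1, Finset.sum_congr rfl (fun ν hν => by rw [hc ν hν]), ← Finset.smul_sum]
  congr 1
  exact Finsupp.sum_single c

lemma NSD_eq : (NSD : Dm n →ₗ[ℝ] Dm n) = -(ImD ∘ₗ ImD) := by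
  refine Finsupp.lhom_ext fun ν a => ?_
  rw [LinearMap.neg_apply, LinearMap.comp_apply, ImD_single, map_sum]
  have hT : ∀ i : Fin n, ImD (Finsupp.single (ν + Finsupp.single i.succ 1) (gen i * a))
      = ∑ j : Fin n, Finsupp.single (ν + Finsupp.single i.succ 1 + Finsupp.single j.succ 1)
          (gen j * (gen i * a)) := fun i => ImD_single _ _
  rw [Finset.sum_congr rfl fun i _ => hT i]
  set T : Fin n → Fin n → Dm n := fun i j =>
    Finsupp.single (ν + Finsupp.single i.succ 1 + Finsupp.single j.succ 1)
      (gen j * (gen i * a)) with hTdef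
  have hsum2 : (2:ℝ) • (∑ i : Fin n, ∑ j : Fin n, T i j)
      = (2:ℝ) • (∑ i : Fin n, T i i) := by
    have hswap : (∑ i : Fin n, ∑ j : Fin n, T i j) = ∑ i : Fin n, ∑ j : Fin n, T j i :=
      Finset.sum_comm
    have h2 : (2:ℝ) • (∑ i : Fin n, ∑ j : Fin n, T i j)
        = ∑ i : Fin n, ∑ j : Fin n, (T i j + T j i) := by
      rw [two_smul]
      nth_rewrite 2 [hswap]
      rw [← Finset.sum_add_distrib]
      refine Finset.sum_congr rfl fun i _ => ?_
      rw [← Finset.sum_add_distrib]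
    have hcases : ∀ i j : Fin n, T i j + T j i
        = if i = j then (2:ℝ) • T i i else 0 := by
      intro i j
      by_cases hij : i = j
      · subst hij; rw [if_pos rfl, two_smul]
      · rw [if_neg hij]
        show Finsupp.single (ν + Finsupp.single i.succ 1 + Finsupp.single j.succ 1)
              (gen j * (gen i * a))
            + Finsupp.single (ν + Finsupp.single j.succ 1 + Finsupp.single i.succ 1)
              (gen i * (gen j * a)) = 0
        rw [add_right_comm ν (Finsupp.single j.succ 1) (Finsupp.single i.succ 1),
          ← Finsupp.single_add]
        have hz : gen j * (gen i * a) + gen i * (gen j * a) = 0 := by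
          rw [← mul_assoc, ← mul_assoc, ← add_mul,
            gen_anticomm (show j ≠ i from fun h => hij h.symm), zero_mul]
        rw [hz, Finsupp.single_zero]
    rw [h2, Finset.sum_congr rfl fun i _ => Finset.sum_congr rfl fun j _ => hcases i j]
    rw [Finset.sum_congr rfl fun i (_ : i ∈ Finset.univ) => Finset.sum_ite_eq (Finset.univ) i
      (fun _ => (2:ℝ) • T i i)]
    simp only [Finset.mem_univ, if_pos]
    rw [Finset.smul_sum]
  have hS : (∑ i : Fin n, ∑ j : Fin n, T i j) = ∑ i : Fin n, T i i := by
    have hh := congrArg (fun z => (2:ℝ)⁻¹ • z) hsum2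
    simp only [smul_smul] at hh
    norm_num at hh
    exact hh
  have hT2 : ∀ i : Fin n, T i i
      = Finsupp.single (ν + Finsupp.single i.succ 1 + Finsupp.single i.succ 1) (-a) := by
    intro i
    show Finsupp.single (ν + Finsupp.single i.succ 1 + Finsupp.single i.succ 1)
        (gen i * (gen i * a)) = _
    rw [← mul_assoc, gen_mul_self, neg_one_mul]
  rw [NSD_single, hS, Finset.sum_congr rfl fun i _ => hT2 i, ← Finset.sum_neg_distrib]
  refine Finset.sum_congr rfl fun i _ => ?_
  rw [Finsupp.single_neg, neg_neg]

lemma pdD0_XPD : (pdD 0 ∘ₗ XPD : Dm n →ₗ[ℝ] Dm n) = LinearMap.id + XPD ∘ₗ pdD 0 := by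
  refine Finsupp.lhom_ext fun ν a => ?_
  rw [LinearMap.comp_apply, LinearMap.add_apply, LinearMap.id_apply, LinearMap.comp_apply]
  by_cases h0 : ν 0 = 0
  · have hpd : pdD 0 (Finsupp.single ν a) = 0 := by
      rw [pdD_single, h0]; simp
    rw [hpd, map_zero, add_zero]
    rw [XPD, LinearMap.add_apply, xm_single, ImD_single, map_add, map_sum, pdD_single]
    have h00 : ((ν + Finsupp.single 0 1 : Mu n) 0 : ℝ) = 1 := by
      rw [Finsupp.add_apply, Finsupp.single_apply, if_pos rfl, h0]; norm_num
    rw [h00, mu_add_sub_cancel ν 0, one_smul]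
    have hz : ∀ i : Fin n,
        pdD 0 (Finsupp.single (ν + Finsupp.single i.succ 1) (gen i * a)) = 0 := by
      intro i
      rw [pdD_single, mu_apply_add_single_ne ν i.succ 0 (Fin.succ_ne_zero i), h0]
      simp
    rw [Finset.sum_congr rfl fun i _ => hz i, Finset.sum_const_zero, add_zero]
  · have hL : pdD 0 (XPD (Finsupp.single ν a)) = ((ν 0 : ℝ) + 1) • Finsupp.single ν a
        + ∑ i : Fin n, (ν 0 : ℝ) •
            Finsupp.single (ν - Finsupp.single 0 1 + Finsupp.single i.succ 1) (gen i * a) := by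
      rw [XPD, LinearMap.add_apply, xm_single, ImD_single, map_add, map_sum, pdD_single]
      congr 1
      · rw [mu_add_sub_cancel ν 0]
        congr 1
        have h01 : (ν + Finsupp.single 0 1 : Mu n) 0 = ν 0 + 1 := by
          rw [Finsupp.add_apply, Finsupp.single_apply, if_pos rfl]
        rw [h01]
        push_cast
        ring
      · refine Finset.sum_congr rfl fun i _ => ?_
        rw [pdD_single, mu_apply_add_single_ne ν i.succ 0 (Fin.succ_ne_zero i),
          mu_add_sub_comm ν i.succ 0 h0]
    have hR : XPD (pdD 0 (Finsupp.single ν a)) = (ν 0 : ℝ) • Finsupp.single ν a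
        + ∑ i : Fin n, (ν 0 : ℝ) •
            Finsupp.single (ν - Finsupp.single 0 1 + Finsupp.single i.succ 1) (gen i * a) := by
      rw [pdD_single, map_smul, XPD, LinearMap.add_apply, xm_single, ImD_single,
        mu_sub_add_cancel ν 0 h0, smul_add, Finset.smul_sum]
    rw [hL, hR, add_smul, one_smul]
    abel

lemma pdD_support (j : Fin (n+1)) (e : Dm n) {ρ : Mu n}
    (hρ : ρ ∈ (pdD j e).support) :
    ∃ ν ∈ e.support, ν j ≠ 0 ∧ ρ = ν - Finsupp.single j 1 := by
  classical
  rw [pdD, Finsupp.lsum_apply] at hρ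
  obtain ⟨ν, hν, hρ2⟩ := Finset.mem_biUnion.mp (Finsupp.support_sum hρ)
  rw [LinearMap.smul_apply, Finsupp.lsingle_apply] at hρ2
  by_cases h0 : ν j = 0
  · rw [h0] at hρ2; simp at hρ2
  · have h1 := Finsupp.support_single_subset (Finsupp.support_smul hρ2)
    rw [Finset.mem_singleton] at h1
    exact ⟨ν, hν, h0, h1⟩

lemma ImD_inj (hn : 1 ≤ n) (e : Dm n) (h : ImD e = 0) : e = 0 := by
  apply Ev_inj
  apply Ev_zero_of_ae hn
  intro x hx
  have hns : normSqIm x ≠ 0 := by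
    obtain ⟨i, hi⟩ := hx
    have hpos : 0 < normSqIm x :=
      Finset.sum_pos' (fun t _ => sq_nonneg _) ⟨i, Finset.mem_univ i, by positivity⟩
    exact ne_of_gt hpos
  have h1 : Ev (ImD e) x = 0 := by rw [h]; simp
  rw [Ev_ImD] at h1
  exact im_mul_cancel hns h1

/-- The key induction: homogeneous formal solutions of `x·∂₀e = m e` are `x^m a`. -/
lemma key_induction : ∀ (m : ℕ) (e : Dm n), (∀ ν ∈ e.support, degF ν = m) →
    XPD (pdD 0 e) = (m : ℝ) • e → ∃ a : Cl n, ∀ x : Pt n, Ev e x = par x ^ m * a := by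
  intro m
  induction m with
  | zero =>
    intro e he _
    refine ⟨e 0, fun x => ?_⟩
    have he0 : e = Finsupp.single 0 (e 0) := by
      ext ν
      by_cases hν : ν ∈ e.support
      · have hd := he ν hν
        have hν0 : ν = 0 := by
          ext t
          have hz : ∑ i, ν i = 0 := hd
          have := (Finset.sum_eq_zero_iff).mp hz t (Finset.mem_univ t)
          simpa using this
        subst hν0
        rw [Finsupp.single_eq_same]
      · rw [Finsupp.notMem_support_iff.mp hν, Finsupp.single_apply]
        split_ifs with h
        · subst h
          exact (Finsupp.notMem_support_iff.mp hν).symm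
        · rfl
    rw [he0, Ev_single]
    have hm1 : mono 0 x = 1 := by
      unfold mono
      refine Finset.prod_eq_one fun i _ => ?_
      rw [Finsupp.coe_zero, Pi.zero_apply, pow_zero]
    rw [hm1, one_smul, pow_zero, one_mul]
    exact (Finsupp.single_eq_same).symm
  | succ m ih =>
    intro e he hpde
    have hsupp' : ∀ ρ ∈ (pdD 0 e).support, degF ρ = m := by
      intro ρ hρ
      obtain ⟨ν, hν, h0, rfl⟩ := pdD_support 0 e hρ
      have h1 := degF_tsub ν 0 h0
      have h2 := he ν hν
      omega
    have hcomm := LinearMap.ext_iff.mp (pdD0_XPD (n := n)) (pdD 0 e)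
    rw [LinearMap.comp_apply, LinearMap.add_apply, LinearMap.id_apply,
      LinearMap.comp_apply] at hcomm
    have hpde' : XPD (pdD 0 (pdD 0 e)) = (m : ℝ) • pdD 0 e := by
      have h1 := congrArg (pdD 0) hpde
      rw [hcomm, map_smul] at h1
      have hcast : ((m + 1 : ℕ) : ℝ) = (m : ℝ) + 1 := by push_cast; ring
      rw [hcast, add_smul, one_smul] at h1
      rw [add_comm] at h1
      exact add_right_cancel h1
    obtain ⟨b, hb⟩ := ih (pdD 0 e) hsupp' hpde'
    refine ⟨((m : ℝ) + 1)⁻¹ • b, fun x => ?_⟩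
    have hEv := congrFun (congrArg (fun z => Ev z) hpde) x
    rw [Ev_XPD, hb, map_smul, Pi.smul_apply] at hEv
    have hcast : ((m + 1 : ℕ) : ℝ) = (m : ℝ) + 1 := by push_cast; ring
    rw [hcast] at hEv
    have hne : ((m : ℝ) + 1) ≠ 0 := by positivity
    have : Ev e x = ((m : ℝ) + 1)⁻¹ • (par x * (par x ^ m * b)) := by
      rw [hEv, smul_smul, inv_mul_cancel₀ hne, one_smul]
    rw [this, mul_smul_comm, ← mul_assoc, ← pow_succ']

lemma sum_filter_deg (c : Dm n) (d : ℕ) (hd : ∀ ν ∈ c.support, degF ν ≤ d) :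
    ∑ m ∈ Finset.range (d+1), c.filter (fun ν => degF ν = m) = c := by
  ext ν
  rw [Finsupp.finset_sum_apply]
  have h1 : ∀ m ∈ Finset.range (d+1), (c.filter (fun ν => degF ν = m)) ν
      = if degF ν = m then c ν else 0 := fun m _ => rfl
  rw [Finset.sum_congr rfl h1, Finset.sum_ite_eq]
  by_cases hν : ν ∈ c.support
  · rw [if_pos (Finset.mem_range.mpr (Nat.lt_succ_of_le (hd ν hν)))]
  · rw [Finsupp.notMem_support_iff.mp hν]
    simp

end Statement1Aux


/-- A polynomial function `f : ℝ^{n+1} → ℝ_n` with `ϑ̄f = 0` at every point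
with `x̲ ≠ 0` has the form `f(x) = Σ_{j=0}^d x^j a_j`. -/
theorem statement1 (n : ℕ) (hn : 1 ≤ n) (f : Pt n → Cl n) (hpoly : IsPolyFun f)
    (hreg : ∀ x : Pt n, (∃ i : Fin n, x i.succ ≠ 0) → thetaBar f x = 0) :
    ∃ (d : ℕ) (a : ℕ → Cl n), ∀ x : Pt n,
      f x = ∑ j ∈ Finset.range (d + 1), par x ^ j * a j := by
  classical
  open Statement1Aux in
  obtain ⟨s, aco, hf⟩ := hpoly
  set c : Dm n := ∑ ν ∈ s, Finsupp.single (Finsupp.equivFunOnFinite.symm ν) (aco ν) with hc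
  have hfc : f = Ev c := by
    funext x
    rw [hf x, hc, map_sum, Finset.sum_apply]
    refine Finset.sum_congr rfl fun ν _ => ?_
    rw [Ev_single]
    rfl
  have hGev : ∀ x : Pt n, (∃ i : Fin n, x i.succ ≠ 0) →
      Ev (NSD (pdD 0 c) + ImD (EuD c)) x = 0 := by
    intro x hx
    have hth := hreg x hx
    rw [hfc] at hth
    simp only [thetaBar, imInv, euler] at hth
    have hns : normSqIm x ≠ 0 := by
      obtain ⟨i, hi⟩ := hx
      have hpos : 0 < normSqIm x :=
        Finset.sum_pos' (fun t _ => sq_nonneg _) ⟨i, Finset.mem_univ i, by positivity⟩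
      exact ne_of_gt hpos
    rw [neg_mul, sub_neg_eq_add, smul_mul_assoc] at hth
    have h3 := congrArg (fun z => normSqIm x • z) hth
    simp only [smul_add, smul_zero, smul_smul, mul_inv_cancel₀ hns, one_smul] at h3
    have heu : (∑ i : Fin n, x i.succ • pd i.succ (Ev c) x) = Ev (EuD c) x := by
      rw [Ev_EuD]
      exact Finset.sum_congr rfl fun i _ => by rw [pd_Ev]
    rw [map_add, Pi.add_apply, Ev_NSD, Ev_ImD, ← pd_Ev, ← heu]
    exact h3
  have hGz : NSD (pdD 0 c) + ImD (EuD c) = 0 :=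
    Ev_inj _ (Ev_zero_of_ae hn _ hGev)
  have hXPD : ∀ m : ℕ, XPD (pdD 0 (c.filter (fun ν => degF ν = m)))
      = (m:ℝ) • c.filter (fun ν => degF ν = m) := by
    intro m
    set cm := c.filter (fun ν => degF ν = m) with hcm
    have hsupp : ∀ ν ∈ cm.support, degF ν = m := by
      intro ν hν
      rw [hcm, Finsupp.support_filter, Finset.mem_filter] at hν
      exact hν.2
    have hpsi : PsiD cm = 0 := by
      have hr := filter_raise PsiD PsiD_raise m c
      rw [hcm, ← hr]
      have hP : PsiD c = 0 := by
        rw [PsiD, LinearMap.add_apply, LinearMap.comp_apply, LinearMap.comp_apply]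
        exact hGz
      rw [hP, Finsupp.filter_zero]
    have heul : EuD cm = (m:ℝ) • cm - xm 0 (pdD 0 cm) := by
      have h := EuD_of_hom m cm hsupp
      rw [← h]
      abel
    have hnsd : NSD (pdD 0 cm) = -(ImD (ImD (pdD 0 cm))) := by
      have h := LinearMap.ext_iff.mp (NSD_eq (n := n)) (pdD 0 cm)
      rwa [LinearMap.neg_apply, LinearMap.comp_apply] at h
    have himd : ImD ((m:ℝ) • cm - XPD (pdD 0 cm)) = 0 := by
      rw [PsiD, LinearMap.add_apply, LinearMap.comp_apply, LinearMap.comp_apply,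
        hnsd, heul, map_sub] at hpsi
      rw [XPD, LinearMap.add_apply, map_sub, map_add]
      abel_nf at hpsi ⊢
      exact hpsi
    have hz : (m:ℝ) • cm - XPD (pdD 0 cm) = 0 := ImD_inj hn _ himd
    exact (sub_eq_zero.mp hz).symm
  have hm : ∀ m : ℕ, ∃ a : Cl n, ∀ x : Pt n,
      Ev (c.filter (fun ν => degF ν = m)) x = par x ^ m * a := by
    intro m
    refine key_induction m _ (fun ν hν => ?_) (hXPD m)
    rw [Finsupp.support_filter, Finset.mem_filter] at hν
    exact hν.2
  choose aa haa using hm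
  refine ⟨c.support.sup degF, aa, fun x => ?_⟩
  have hsum := sum_filter_deg c (c.support.sup degF)
    (fun ν hν => Finset.le_sup (f := degF) hν)
  calc f x = Ev c x := by rw [hfc]
    _ = Ev (∑ m ∈ Finset.range (c.support.sup degF + 1),
          c.filter (fun ν => degF ν = m)) x := by rw [hsum]
    _ = ∑ m ∈ Finset.range (c.support.sup degF + 1),
          Ev (c.filter (fun ν => degF ν = m)) x := by
        rw [map_sum, Finset.sum_apply]
    _ = ∑ m ∈ Finset.range (c.support.sup degF + 1), par x ^ m * aa m :=
        Finset.sum_congr rfl fun m _ => haa m x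
end
end

section
/- Let Ω ⊆ ℝ^{n+1} be open and invariant under every reflection r_i, and let f : Ω → ℝ_n be of class C². Set γ = n/2 + Σ_{i=1}^n k_i. Then at every point of Ω whose coordinates x_1,…,x_n are all nonzero: (1) x̲·(D̲f) + D̲(x̲f) = −2·(𝔼f + γ·f); (2) D̲(𝔼f) − 𝔼(D̲f) = D̲f; (3) Δ_D(x̲f) − x̲·(Δ_D f) = 2·D̲f, where Δ_D f = Σ_{i=1}^n T_i(T_i f); (4) D̲(‖x̲‖²·f) − ‖x̲‖²·(D̲f) = 2·(x̲f). -/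
noncomputable section

open scoped BigOperators

open Dunkl

open Dunkl
namespace Dunkl
variable {n : ℕ}

lemma Qneg_apply (v : Fin n → ℝ) : Qneg n v = -∑ t, (v t)^2 := by
  simp [Qneg, QuadraticMap.weightedSumSquares_apply, sq, Finset.sum_neg_distrib]

lemma Qneg_single (i : Fin n) : Qneg n (Pi.single i 1) = -1 := by
  classical
  rw [Qneg_apply]
  simp [Pi.single_apply, ite_pow, Finset.sum_ite_eq']

lemma gen_mul_self (i : Fin n) : gen i * gen i = -1 := by
  rw [gen, CliffordAlgebra.ι_sq_scalar, Qneg_single, map_neg, map_one]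

lemma gen_anticomm {i j : Fin n} (h : i ≠ j) : gen i * gen j = -(gen j * gen i) := by
  classical
  have hpolar : QuadraticMap.polar (⇑(Qneg n)) (Pi.single i 1) (Pi.single j 1) = 0 := by
    rw [QuadraticMap.polar, Qneg_apply, Qneg_apply, Qneg_apply]
    have : ∀ t : Fin n, (((Pi.single i (1:ℝ) + Pi.single j (1:ℝ)) : Fin n → ℝ) t)^2
        = ((Pi.single i (1:ℝ) : Fin n → ℝ) t)^2 + ((Pi.single j (1:ℝ) : Fin n → ℝ) t)^2 := by
      intro t
      rcases eq_or_ne t i with rfl | hti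
      · simp [Pi.single_apply, h.symm]
      · rcases eq_or_ne t j with rfl | htj
        · simp [Pi.single_apply, hti]
        · simp [Pi.single_apply, hti, htj]
    rw [Finset.sum_congr rfl fun t _ => this t, Finset.sum_add_distrib]
    ring
  have h2 := CliffordAlgebra.ι_mul_ι_add_swap (Q := Qneg n) (Pi.single i (1:ℝ)) (Pi.single j 1)
  rw [hpolar, map_zero] at h2
  rw [gen, gen]
  exact eq_neg_of_add_eq_zero_left h2
def monoL (l : List (Fin n)) : Cl n := (l.map gen).prod

lemma monoL_nil : monoL ([] : List (Fin n)) = 1 := rfl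

lemma monoL_cons (a : Fin n) (l : List (Fin n)) : monoL (a :: l) = gen a * monoL l := by
  simp [monoL]

lemma gen_mul_monoL : ∀ (l : List (Fin n)), l.Pairwise (· < ·) → ∀ j : Fin n,
    ∃ (c : ℝ) (m : List (Fin n)), m.Pairwise (· < ·) ∧ (∀ b ∈ m, b ∈ j :: l) ∧
      gen j * monoL l = c • monoL m
  | [], _, j => ⟨1, [j], by simp, by simp, by simp [monoL_cons]⟩
  | a :: t, hs, j => by
    rw [List.pairwise_cons] at hs
    obtain ⟨hat, hst⟩ := hs
    rcases lt_trichotomy j a with hja | rfl | haj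
    · refine ⟨1, j :: a :: t, ?_, by intro b hb; exact hb, by simp [monoL_cons]⟩
      rw [List.pairwise_cons]
      refine ⟨?_, by rw [List.pairwise_cons]; exact ⟨hat, hst⟩⟩
      intro b hb
      rcases List.mem_cons.mp hb with rfl | hb
      · exact hja
      · exact hja.trans (hat b hb)
    · refine ⟨-1, t, hst, fun b hb => List.mem_cons_of_mem _ (List.mem_cons_of_mem _ hb), ?_⟩
      rw [monoL_cons, ← mul_assoc, gen_mul_self]
      simp
    · obtain ⟨c, m, hm, hmem, heq⟩ := gen_mul_monoL t hst j
      refine ⟨-c, a :: m, ?_, ?_, ?_⟩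
      · rw [List.pairwise_cons]
        refine ⟨?_, hm⟩
        intro b hb
        rcases List.mem_cons.mp (hmem b hb) with rfl | hb'
        · exact haj
        · exact hat b hb'
      · intro b hb
        rcases List.mem_cons.mp hb with rfl | hb'
        · exact List.mem_cons_of_mem _ List.mem_cons_self
        · rcases List.mem_cons.mp (hmem b hb') with rfl | hb''
          · exact List.mem_cons_self
          · exact List.mem_cons_of_mem _ (List.mem_cons_of_mem _ hb'')
      · rw [monoL_cons, ← mul_assoc, gen_anticomm (ne_of_gt haj), neg_mul, mul_assoc, heq,
          monoL_cons, mul_smul_comm, neg_smul]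

def monoSet (n : ℕ) : Finset (Cl n) :=
  @Finset.image _ _ (Classical.decEq _) (fun s : Finset (Fin n) => monoL (s.sort (· ≤ ·))) Finset.univ

lemma monoL_mem_span {l : List (Fin n)} (hl : l.Pairwise (· < ·)) :
    monoL l ∈ Submodule.span ℝ ((monoSet n : Finset (Cl n)) : Set (Cl n)) := by
  apply Submodule.subset_span
  have hnd : l.Nodup := hl.nodup
  have : Finset.sort l.toFinset (· ≤ ·) = l :=
    (List.toFinset_sort (r := (· ≤ ·)) hnd).mpr (hl.imp le_of_lt)
  simp only [monoSet, Finset.coe_image, Set.mem_image]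
  exact ⟨l.toFinset, by simp, by rw [this]⟩

lemma gen_mul_mem_span (j : Fin n) {z : Cl n}
    (hz : z ∈ Submodule.span ℝ ((monoSet n : Finset (Cl n)) : Set (Cl n))) :
    gen j * z ∈ Submodule.span ℝ ((monoSet n : Finset (Cl n)) : Set (Cl n)) := by
  induction hz using Submodule.span_induction with
  | mem w hw =>
    simp only [monoSet, Finset.coe_image, Set.mem_image] at hw
    obtain ⟨s, -, rfl⟩ := hw
    obtain ⟨c, m, hm, -, heq⟩ := gen_mul_monoL (s.sort (· ≤ ·)) (s.sortedLT_sort.pairwise) j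
    rw [heq]
    exact Submodule.smul_mem _ _ (monoL_mem_span hm)
  | zero => simp
  | add a b _ _ ha hb => rw [mul_add]; exact Submodule.add_mem _ ha hb
  | smul c a _ ha => rw [mul_smul_comm]; exact Submodule.smul_mem _ _ ha

lemma ι_eq_sum (m : Fin n → ℝ) :
    CliffordAlgebra.ι (Qneg n) m = ∑ i, m i • gen i := by
  have hm : m = ∑ i, m i • (Pi.single i (1:ℝ) : Fin n → ℝ) := by
    funext t
    simp [Pi.single_apply, Finset.sum_ite_eq']
  conv_lhs => rw [hm]
  rw [map_sum]
  exact Finset.sum_congr rfl fun i _ => by rw [map_smul]; rfl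

lemma span_monoSet_eq_top : Submodule.span ℝ ((monoSet n : Finset (Cl n)) : Set (Cl n)) = ⊤ := by
  set P := Submodule.span ℝ ((monoSet n : Finset (Cl n)) : Set (Cl n)) with hP
  have hone : (1 : Cl n) ∈ P := by
    have := monoL_mem_span (n := n) (l := []) (by simp)
    rwa [monoL_nil] at this
  have key : ∀ a : Cl n, ∀ z ∈ P, a * z ∈ P := by
    intro a
    induction a using CliffordAlgebra.induction with
    | algebraMap r => intro z hz; rw [← Algebra.smul_def]; exact Submodule.smul_mem _ _ hz
    | ι m =>
      intro z hz
      rw [ι_eq_sum, Finset.sum_mul]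
      exact Submodule.sum_mem _ fun i _ => by
        rw [smul_mul_assoc]; exact Submodule.smul_mem _ _ (gen_mul_mem_span i hz)
    | mul a b ha hb => intro z hz; rw [mul_assoc]; exact ha _ (hb _ hz)
    | add a b ha hb => intro z hz; rw [add_mul]; exact Submodule.add_mem _ (ha _ hz) (hb _ hz)
  rw [Submodule.eq_top_iff']
  intro a
  have := key a 1 hone
  rwa [mul_one] at this

instance : Module.Finite ℝ (Cl n) :=
  ⟨⟨monoSet n, span_monoSet_eq_top⟩⟩
/-! ### CLM infrastructure -/

instance : FiniteDimensional ℝ (Cl n) := inferInstance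

def lmul (c : Cl n) : Cl n →L[ℝ] Cl n := LinearMap.toContinuousLinearMap (LinearMap.mulLeft ℝ c)
def rmul (c : Cl n) : Cl n →L[ℝ] Cl n := LinearMap.toContinuousLinearMap (LinearMap.mulRight ℝ c)

@[simp] lemma lmul_apply (c z : Cl n) : lmul c z = c * z := rfl
@[simp] lemma rmul_apply (c z : Cl n) : rmul c z = z * c := rfl

def mulB : Cl n →L[ℝ] Cl n →L[ℝ] Cl n :=
  LinearMap.toContinuousLinearMap
    { toFun := fun c => lmul c
      map_add' := by intros a b; ext z; simp [add_mul]
      map_smul' := by intros c a; ext z; simp [smul_mul_assoc] }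

@[simp] lemma mulB_apply (a b : Cl n) : mulB a b = a * b := rfl

def coordL (j : Fin (n+1)) : Pt n →L[ℝ] ℝ := ContinuousLinearMap.proj j

@[simp] lemma coordL_apply (j : Fin (n+1)) (x : Pt n) : coordL j x = x j := rfl

def imL : Pt n →L[ℝ] Cl n := ∑ i : Fin n, (coordL i.succ).smulRight (gen i)

@[simp] lemma imL_apply (x : Pt n) : imL x = im x := by
  simp [imL, im, ContinuousLinearMap.sum_apply]

lemma single_succ_apply_succ (i j : Fin n) :
    (Pi.single j.succ (1:ℝ) : Pt n) i.succ = if i = j then 1 else 0 := by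
  rw [Pi.single_apply]
  simp [Fin.succ_inj]

lemma im_single_succ (j : Fin n) : im (Pi.single j.succ (1:ℝ) : Pt n) = gen j := by
  rw [im]
  rw [Finset.sum_congr rfl fun i _ => by rw [single_succ_apply_succ, ite_smul, one_smul, zero_smul]]
  simp

def reflL (i : Fin n) : Pt n →L[ℝ] Pt n :=
  ContinuousLinearMap.id ℝ (Pt n) - (2:ℝ) • (coordL i.succ).smulRight (Pi.single i.succ 1)

lemma reflL_apply (i : Fin n) (x : Pt n) : reflL i x = refl i x := by
  funext t
  simp only [reflL, refl, ContinuousLinearMap.sub_apply, ContinuousLinearMap.id_apply,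
    ContinuousLinearMap.smul_apply, ContinuousLinearMap.smulRight_apply, coordL_apply,
    Pi.sub_apply, Pi.smul_apply, Pi.single_apply, smul_eq_mul]
  by_cases h : t = i.succ <;> simp [h] <;> ring

/-! ### reflection lemmas -/

@[simp] lemma refl_apply_succ (i : Fin n) (x : Pt n) : refl i x i.succ = -(x i.succ) := by
  simp [refl]

lemma refl_apply_ne (i : Fin n) (x : Pt n) {t : Fin (n+1)} (h : t ≠ i.succ) :
    refl i x t = x t := by simp [refl, h]

@[simp] lemma refl_apply_zero (i : Fin n) (x : Pt n) : refl i x 0 = x 0 :=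
  refl_apply_ne i x (Fin.succ_ne_zero i).symm

lemma refl_apply_succ_ne (i : Fin n) (x : Pt n) {j : Fin n} (h : j ≠ i) :
    refl i x j.succ = x j.succ :=
  refl_apply_ne i x (by simp [Fin.succ_inj, h])

lemma refl_refl (i : Fin n) (x : Pt n) : refl i (refl i x) = x := by
  funext t
  by_cases h : t = i.succ
  · subst h; simp
  · rw [refl_apply_ne i _ h, refl_apply_ne i _ h]

lemma allNZ_refl {i : Fin n} {x : Pt n} (h : allNZ x) : allNZ (refl i x) := by
  intro j
  by_cases hj : j = i
  · subst hj; rw [refl_apply_succ]; simpa using h j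
  · rw [refl_apply_succ_ne i x hj]; exact h j

lemma im_refl (i : Fin n) (x : Pt n) : im (refl i x) = im x - (2 * x i.succ) • gen i := by
  rw [im, im]
  have : ∀ j : Fin n, refl i x j.succ • gen j
      = x j.succ • gen j - (if j = i then (2 * x i.succ) • gen i else 0) := by
    intro j
    by_cases hj : j = i
    · subst hj; rw [refl_apply_succ, if_pos rfl, ← sub_smul]; ring_nf
    · rw [refl_apply_succ_ne i x hj, if_neg hj, sub_zero]
  rw [Finset.sum_congr rfl fun j _ => this j, Finset.sum_sub_distrib]
  simp

lemma normSqIm_refl (i : Fin n) (x : Pt n) : normSqIm (refl i x) = normSqIm x := by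
  rw [normSqIm, normSqIm]
  refine Finset.sum_congr rfl fun j _ => ?_
  by_cases hj : j = i
  · subst hj; rw [refl_apply_succ]; ring
  · rw [refl_apply_succ_ne i x hj]

/-! ### derivative helpers -/

lemma hasFDerivAt_coord (j : Fin (n+1)) (y : Pt n) :
    HasFDerivAt (fun z : Pt n => z j) (coordL j) y :=
  (coordL j).hasFDerivAt

lemma hasFDerivAt_mul {g h : Pt n → Cl n} {g' h' : Pt n →L[ℝ] Cl n} {y : Pt n}
    (hg : HasFDerivAt g g' y) (hh : HasFDerivAt h h' y) :
    HasFDerivAt (fun z => g z * h z) ((lmul (g y)).comp h' + (rmul (h y)).comp g') y := by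
  have hb := (mulB (n := n)).isBoundedBilinearMap.hasFDerivAt (g y, h y)
  have hcomp := hb.comp y (hg.prodMk hh)
  convert hcomp using 1 <;> rfl

lemma hasFDerivAt_im (y : Pt n) : HasFDerivAt (fun z : Pt n => im z) imL y := by
  have : (fun z : Pt n => im z) = ⇑(imL (n := n)) := funext fun z => (imL_apply z).symm
  rw [this]
  exact imL.hasFDerivAt

lemma hasFDerivAt_refl_comp {g : Pt n → Cl n} {g' : Pt n →L[ℝ] Cl n} {i : Fin n} {y : Pt n}
    (hg : HasFDerivAt g g' (refl i y)) :
    HasFDerivAt (fun z => g (refl i z)) (g'.comp (reflL i)) y := by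
  have h1 : HasFDerivAt (⇑(reflL i)) (reflL i) y := (reflL i).hasFDerivAt
  rw [← reflL_apply] at hg
  have h2 := hg.comp y h1
  simp only [Function.comp_def, reflL_apply] at h2
  exact h2
/-! ### pd and T computation lemmas -/

lemma pd_eq {g : Pt n → Cl n} {g' : Pt n →L[ℝ] Cl n} {y : Pt n} (hg : HasFDerivAt g g' y)
    (j : Fin (n+1)) : pd j g y = g' (Pi.single j 1) := by
  rw [pd, hg.fderiv]

lemma T_def (k : Fin n → ℝ) (i : Fin n) (g : Pt n → Cl n) (y : Pt n) :
    T k i g y = pd i.succ g y + (k i / y i.succ) • (g y - g (refl i y)) := rfl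

lemma T_add {k : Fin n → ℝ} {i : Fin n} {g h : Pt n → Cl n} {y : Pt n}
    (hg : DifferentiableAt ℝ g y) (hh : DifferentiableAt ℝ h y) :
    T k i (fun z => g z + h z) y = T k i g y + T k i h y := by
  simp only [T_def, pd]
  rw [fderiv_fun_add hg hh, ContinuousLinearMap.add_apply]
  module

lemma T_constMul {k : Fin n → ℝ} {i : Fin n} {g : Pt n → Cl n} {y : Pt n} (c : Cl n)
    (hg : DifferentiableAt ℝ g y) :
    T k i (fun z => c * g z) y = c * T k i g y := by
  have hd := hasFDerivAt_mul (hasFDerivAt_const c y) hg.hasFDerivAt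
  simp only [T_def, pd]
  rw [hd.fderiv]
  simp only [ContinuousLinearMap.add_apply, ContinuousLinearMap.comp_apply, lmul_apply,
    rmul_apply, ContinuousLinearMap.zero_apply, zero_mul, add_zero, mul_add, mul_smul_comm,
    mul_sub]

lemma T_constSmul {k : Fin n → ℝ} {i : Fin n} {g : Pt n → Cl n} {y : Pt n} (a : ℝ)
    (hg : DifferentiableAt ℝ g y) :
    T k i (fun z => a • g z) y = a • T k i g y := by
  have hd := hg.hasFDerivAt.fun_const_smul a
  simp only [T_def, pd]
  rw [hd.fderiv, ContinuousLinearMap.smul_apply]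
  module

lemma refl_single (i : Fin n) :
    refl i (Pi.single i.succ 1 : Pt n) = -(Pi.single i.succ (1:ℝ) : Pt n) := by
  funext t
  by_cases h : t = i.succ
  · subst h; simp [refl]
  · rw [refl_apply_ne i _ h]; simp [Pi.single_apply, h]

lemma T_mul_im {k : Fin n → ℝ} {i : Fin n} {g : Pt n → Cl n} {y : Pt n}
    (hi : y i.succ ≠ 0) (hg : DifferentiableAt ℝ g y) :
    T k i (fun z => im z * g z) y
      = gen i * g y + im y * T k i g y + (2 * k i) • (gen i * g (refl i y)) := by
  have hd := hasFDerivAt_mul (hasFDerivAt_im y) hg.hasFDerivAt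
  have hc : k i / y i.succ * (2 * y i.succ) = 2 * k i := by field_simp
  simp only [T_def, pd]
  rw [hd.fderiv]
  simp only [ContinuousLinearMap.add_apply, ContinuousLinearMap.comp_apply, lmul_apply,
    rmul_apply, imL_apply, im_single_succ, im_refl]
  rw [sub_mul, smul_mul_assoc, mul_add, mul_smul_comm, mul_sub, smul_sub, smul_sub,
    smul_smul, hc]
  module

lemma hasFDerivAt_normSqIm (y : Pt n) :
    HasFDerivAt (fun z : Pt n => normSqIm z)
      (∑ j : Fin n, (2 * y j.succ) • coordL j.succ) y := by
  have : ∀ j : Fin n, HasFDerivAt (fun z : Pt n => (z j.succ)^2)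
      ((2 * y j.succ) • coordL j.succ) y := by
    intro j
    have h2 := (hasFDerivAt_coord j.succ y).fun_mul (hasFDerivAt_coord j.succ y)
    have heq : (fun z : Pt n => (z j.succ)^2) = fun z => z j.succ * z j.succ := by
      funext z; ring
    rw [heq]
    refine h2.congr_fderiv ?_
    ext v
    simp [coordL]
    ring
  exact HasFDerivAt.fun_sum fun j _ => this j

lemma T_sq {k : Fin n → ℝ} {i : Fin n} {g : Pt n → Cl n} {y : Pt n}
    (hg : DifferentiableAt ℝ g y) :
    T k i (fun z => normSqIm z • g z) y
      = (2 * y i.succ) • g y + normSqIm y • T k i g y := by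
  have hd := (hasFDerivAt_normSqIm y).fun_smul hg.hasFDerivAt
  simp only [T_def, pd]
  rw [hd.fderiv]
  simp only [ContinuousLinearMap.add_apply, ContinuousLinearMap.smul_apply,
    ContinuousLinearMap.smulRight_apply, ContinuousLinearMap.sum_apply, coordL_apply,
    single_succ_apply_succ, normSqIm_refl]
  have hsum : (∑ j : Fin n, (2 * y j.succ) • (if j = i then (1:ℝ) else 0)) = 2 * y i.succ := by
    rw [Finset.sum_congr rfl fun j _ => by rw [smul_eq_mul, mul_ite, mul_one, mul_zero]]
    simp
  rw [hsum, smul_sub, smul_add, smul_sub, smul_comm (k i / y i.succ) (normSqIm y)]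
  module

lemma T_refl_comp {k : Fin n → ℝ} {i : Fin n} {g : Pt n → Cl n} {y : Pt n}
    (hi : y i.succ ≠ 0) (hg : DifferentiableAt ℝ g (refl i y)) :
    T k i (fun z => g (refl i z)) y = -(T k i g (refl i y)) := by
  have hd := hasFDerivAt_refl_comp (i := i) (y := y) hg.hasFDerivAt
  simp only [T_def, pd]
  rw [hd.fderiv]
  rw [ContinuousLinearMap.comp_apply, reflL_apply, refl_single, map_neg]
  simp only [refl_refl, refl_apply_succ]
  rw [div_neg]
  module
/-! ### more helper lemmas -/

lemma hasFDerivAt_kdiv (a : ℝ) {i : Fin n} {y : Pt n} (hi : y i.succ ≠ 0) :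
    HasFDerivAt (fun z : Pt n => a / z i.succ) ((-(a / y i.succ ^ 2)) • coordL i.succ) y := by
  have h1 := (hasFDerivAt_inv' (𝕜 := ℝ) hi).comp y (hasFDerivAt_coord i.succ y)
  have h2 := h1.const_mul a
  have heq : (fun z : Pt n => a / z i.succ) = fun z => a * (Inv.inv ∘ fun z : Pt n => z i.succ) z := by
    funext z; simp [div_eq_mul_inv, Function.comp]
  rw [heq]
  refine h2.congr_fderiv ?_
  ext v
  simp only [ContinuousLinearMap.smul_apply, coordL_apply, ContinuousLinearMap.comp_apply,
    ContinuousLinearMap.neg_apply, ContinuousLinearMap.mulLeftRight_apply, smul_eq_mul]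
  field_simp [hi]
  try ring
  try tauto

lemma hasFDerivAt_pd {f : Pt n → Cl n} {S : Pt n →L[ℝ] (Pt n →L[ℝ] Cl n)} {y : Pt n}
    (hG : HasFDerivAt (fderiv ℝ f) S y) (j : Fin (n+1)) :
    HasFDerivAt (fun z => pd j f z)
      ((ContinuousLinearMap.apply ℝ (Cl n) (Pi.single j 1 : Pt n)).comp S) y := by
  have h := (ContinuousLinearMap.apply ℝ (Cl n) (Pi.single j (1:ℝ) : Pt n)).hasFDerivAt.comp y hG
  simpa [Function.comp_def, pd] using h

lemma hasFDerivAt_T {k : Fin n → ℝ} {i : Fin n} {f : Pt n → Cl n} {y : Pt n}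
    {S : Pt n →L[ℝ] (Pt n →L[ℝ] Cl n)}
    (hi : y i.succ ≠ 0) (hG : HasFDerivAt (fderiv ℝ f) S y)
    (hfy : DifferentiableAt ℝ f y) (hfr : DifferentiableAt ℝ f (refl i y)) :
    HasFDerivAt (T k i f)
      ((ContinuousLinearMap.apply ℝ (Cl n) (Pi.single i.succ 1 : Pt n)).comp S
        + ((k i / y i.succ) • (fderiv ℝ f y - (fderiv ℝ f (refl i y)).comp (reflL i))
          + ((-(k i / y i.succ ^ 2)) • coordL i.succ).smulRight (f y - f (refl i y)))) y := by
  have h1 := hasFDerivAt_pd hG i.succ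
  have h2 := (hasFDerivAt_kdiv (k i) hi).smul
    (hfy.hasFDerivAt.sub (hasFDerivAt_refl_comp hfr.hasFDerivAt))
  exact h1.add h2

lemma T_congr_nhds {k : Fin n → ℝ} {i : Fin n} {g h : Pt n → Cl n} {y : Pt n}
    (hev : g =ᶠ[nhds y] h) (hry : g (refl i y) = h (refl i y)) :
    T k i g y = T k i h y := by
  rw [T_def, T_def, pd, pd, hev.fderiv_eq, hev.self_of_nhds, hry]

lemma refl_single_ne {i j : Fin n} (h : j ≠ i) :
    refl i (Pi.single j.succ 1 : Pt n) = (Pi.single j.succ (1:ℝ) : Pt n) := by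
  funext t
  by_cases ht : t = i.succ
  · subst ht
    have hne : (i.succ : Fin (n+1)) ≠ j.succ := fun hh => h ((Fin.succ_injective n) hh).symm
    rw [refl_apply_succ]
    simp [Pi.single_apply, hne]
  · exact refl_apply_ne i _ ht

lemma gen_mul_im (i : Fin n) (x : Pt n) :
    gen i * im x = -((2 * x i.succ) • (1:Cl n)) - im x * gen i := by
  have key : gen i * im x + im x * gen i = -((2 * x i.succ) • (1:Cl n)) := by
    rw [im, Finset.mul_sum, Finset.sum_mul, ← Finset.sum_add_distrib]
    have : ∀ j : Fin n, gen i * (x j.succ • gen j) + (x j.succ • gen j) * gen i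
        = if j = i then -((2 * x i.succ) • (1:Cl n)) else 0 := by
      intro j
      by_cases hj : j = i
      · subst hj
        rw [if_pos rfl, mul_smul_comm, smul_mul_assoc, gen_mul_self]
        module
      · rw [if_neg hj, mul_smul_comm, smul_mul_assoc, gen_anticomm (fun hh => hj (by rw [hh]) : i ≠ j)]
        module
    rw [Finset.sum_congr rfl fun j _ => this j]
    simp
  exact eq_sub_of_add_eq key

lemma isOpen_allNZ : IsOpen {y : Pt n | allNZ y} := by
  have : {y : Pt n | allNZ y} = ⋂ i : Fin n, {y : Pt n | y i.succ ≠ 0} := by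
    ext y; simp [allNZ]
  rw [this]
  exact isOpen_iInter_of_finite fun i =>
    IsOpen.preimage (continuous_apply i.succ) isOpen_compl_singleton
def uL : Pt n →L[ℝ] Pt n := ∑ j : Fin n, (coordL j.succ).smulRight (Pi.single j.succ 1)

lemma uL_apply (y : Pt n) : uL y = ∑ j : Fin n, y j.succ • (Pi.single j.succ 1 : Pt n) := by
  simp [uL, ContinuousLinearMap.sum_apply]

lemma euler_eq_fderiv (g : Pt n → Cl n) (y : Pt n) :
    euler g y = fderiv ℝ g y (uL y) := by
  rw [euler, uL_apply, map_sum]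
  exact Finset.sum_congr rfl fun j _ => by rw [map_smul]; rfl

lemma uL_single (i : Fin n) : uL (Pi.single i.succ 1 : Pt n) = (Pi.single i.succ (1:ℝ) : Pt n) := by
  rw [uL_apply]
  rw [Finset.sum_congr rfl fun j _ => by
    rw [single_succ_apply_succ, ite_smul, one_smul, zero_smul]]
  simp

lemma uL_coord (y : Pt n) (i : Fin n) : uL y i.succ = y i.succ := by
  rw [uL_apply]
  rw [Finset.sum_apply]
  rw [Finset.sum_congr rfl fun j _ => by
    rw [Pi.smul_apply, single_succ_apply_succ i j, smul_eq_mul, mul_ite, mul_one, mul_zero]]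
  simp

lemma reflL_uL (i : Fin n) (y : Pt n) : reflL i (uL y) = uL (refl i y) := by
  rw [uL_apply, uL_apply, map_sum]
  refine Finset.sum_congr rfl fun j _ => ?_
  rw [map_smul, reflL_apply]
  by_cases hj : j = i
  · subst hj
    rw [refl_single, refl_apply_succ, smul_neg, neg_smul]
  · rw [refl_single_ne hj, refl_apply_succ_ne i y hj]
lemma dunklDirac_apply (k : Fin n → ℝ) (g : Pt n → Cl n) (y : Pt n) :
    dunklDirac k g y = ∑ i : Fin n, gen i * T k i g y := rfl

lemma euler_apply (g : Pt n → Cl n) (y : Pt n) :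
    euler g y = ∑ i : Fin n, y i.succ • pd i.succ g y := rfl

lemma dunklLap_apply (k : Fin n → ℝ) (g : Pt n → Cl n) (y : Pt n) :
    dunklLap k g y = ∑ i : Fin n, T k i (T k i g) y := rfl
end Dunkl

open Dunkl

set_option maxHeartbeats 1000000 in
/-- Commutation relations for the Dunkl-Dirac operator `D̲` on `ℝ_n`-valued
`C²` functions, at points where all the coordinates `x_1, …, x_n` are nonzero. -/
theorem statement3 (n : ℕ) (hn : 1 ≤ n) (k : Fin n → ℝ) (Ω : Set (Pt n))
    (hopen : IsOpen Ω) (hinv : ReflInv Ω) (f : Pt n → Cl n) (hf : ContDiffOn ℝ 2 f Ω) :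
    ∀ x ∈ Ω, allNZ x →
      (im x * dunklDirac k f x + dunklDirac k (fun y => im y * f y) x
        = -((2:ℝ) • (euler f x + ((n : ℝ)/2 + ∑ i : Fin n, k i) • f x))) ∧
      (dunklDirac k (euler f) x - euler (dunklDirac k f) x = dunklDirac k f x) ∧
      (dunklLap k (fun y => im y * f y) x - im x * dunklLap k f x
        = (2:ℝ) • dunklDirac k f x) ∧
      (dunklDirac k (fun y => normSqIm y • f y) x - normSqIm x • dunklDirac k f x
        = (2:ℝ) • (im x * f x)) := by
  intro x hx hnz
  classical
  have hdiff : ∀ y ∈ Ω, DifferentiableAt ℝ f y := fun y hy =>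
    (hf.contDiffAt (hopen.mem_nhds hy)).differentiableAt (by norm_num)
  have hG : ∀ y ∈ Ω, DifferentiableAt ℝ (fderiv ℝ f) y := fun y hy =>
    ((hf.contDiffAt (hopen.mem_nhds hy)).fderiv_right (m := 1) (by norm_num)).differentiableAt
      (by norm_num)
  have hUopen : IsOpen (Ω ∩ {y : Pt n | allNZ y}) := hopen.inter isOpen_allNZ
  have hxU : x ∈ Ω ∩ {y : Pt n | allNZ y} := ⟨hx, hnz⟩
  have hUrefl : ∀ i : Fin n, ∀ y ∈ Ω ∩ {y : Pt n | allNZ y},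
      refl i y ∈ Ω ∩ {y : Pt n | allNZ y} := fun i y hy => ⟨hinv i y hy.1, allNZ_refl hy.2⟩
  have hrx : ∀ i : Fin n, refl i x ∈ Ω := fun i => hinv i x hx
  have hSx : HasFDerivAt (fderiv ℝ f) (fderiv ℝ (fderiv ℝ f) x) x := (hG x hx).hasFDerivAt
  set S := fderiv ℝ (fderiv ℝ f) x with hSdef
  have hsymm : ∀ v w : Pt n, S v w = S w v := by
    refine second_derivative_symmetric_of_eventually (f := f) (f' := fderiv ℝ f) ?_ hSx
    filter_upwards [hopen.mem_nhds hx] with y hy using (hdiff y hy).hasFDerivAt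
  have hTi : ∀ i : Fin n, HasFDerivAt (T k i f)
      ((ContinuousLinearMap.apply ℝ (Cl n) (Pi.single i.succ 1 : Pt n)).comp S
        + ((k i / x i.succ) • (fderiv ℝ f x - (fderiv ℝ f (refl i x)).comp (reflL i))
          + ((-(k i / x i.succ ^ 2)) • coordL i.succ).smulRight (f x - f (refl i x)))) x :=
    fun i => hasFDerivAt_T (hnz i) hSx (hdiff x hx) (hdiff _ (hrx i))
  refine ⟨?_, ?_, ?_, ?_⟩
  · -- Statement (1)
    have hterm1 : ∀ i : Fin n, gen i * T k i (fun y => im y * f y) x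
        = -(f x) - (2 * x i.succ) • T k i f x - im x * (gen i * T k i f x)
          - (2 * k i) • f (refl i x) := by
      intro i
      rw [T_mul_im (hnz i) (hdiff x hx)]
      rw [mul_add, mul_add, ← mul_assoc (gen i) (gen i) (f x), gen_mul_self,
        ← mul_assoc (gen i) (im x) _, gen_mul_im, mul_smul_comm (2 * k i) (gen i) _,
        ← mul_assoc (gen i) (gen i) _, gen_mul_self]
      simp only [sub_mul, neg_mul, smul_mul_assoc, one_mul, mul_assoc, mul_neg, smul_neg]
      module
    have hD1 : dunklDirac k (fun y => im y * f y) x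
        = ∑ i : Fin n, (-(f x) - (2 * x i.succ) • T k i f x - im x * (gen i * T k i f x)
          - (2 * k i) • f (refl i x)) := by
      rw [dunklDirac_apply]; exact Finset.sum_congr rfl fun i _ => hterm1 i
    have hsum2 : ∑ i : Fin n, (2 * x i.succ) • T k i f x
        = (2:ℝ) • euler f x + (∑ i : Fin n, (2 * k i) • f x
            - ∑ i : Fin n, (2 * k i) • f (refl i x)) := by
      rw [euler_apply, Finset.smul_sum, ← Finset.sum_sub_distrib, ← Finset.sum_add_distrib]
      refine Finset.sum_congr rfl fun i _ => ?_
      have hsc : 2 * x i.succ * (k i / x i.succ) = 2 * k i := by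
        field_simp [hnz i]
      rw [T_def, smul_add, smul_smul (2 * x i.succ) (k i / x i.succ), hsc]
      module
    rw [hD1]
    simp only [Finset.sum_sub_distrib]
    rw [hsum2]
    have hA : ∑ _i : Fin n, -(f x) = -((n:ℝ) • f x) := by
      rw [Finset.sum_neg_distrib, Finset.sum_const, Finset.card_univ, Fintype.card_fin,
        Nat.cast_smul_eq_nsmul]
    rw [hA]
    have hC : ∑ i : Fin n, im x * (gen i * T k i f x) = im x * dunklDirac k f x := by
      rw [dunklDirac_apply, Finset.mul_sum]
    rw [hC]
    have hB : ∑ i : Fin n, (2 * k i) • f x = (2 * ∑ i : Fin n, k i) • f x := by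
      rw [← Finset.sum_smul, ← Finset.mul_sum]
    rw [hB]
    module
  · -- Statement (2)
    have hpdE : ∀ i : Fin n, pd i.succ (euler f) x
        = pd i.succ f x + S (Pi.single i.succ 1) (uL x) := by
      intro i
      have heq : euler f = fun z => fderiv ℝ f z (uL z) := funext fun z => euler_eq_fderiv f z
      have hU : HasFDerivAt (fun z : Pt n => uL z) (uL (n := n)) x := uL.hasFDerivAt
      have hd := hSx.clm_apply hU
      rw [heq, pd_eq hd]
      rw [ContinuousLinearMap.add_apply, ContinuousLinearMap.comp_apply,
        ContinuousLinearMap.flip_apply, uL_single]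
      rfl
    have key2 : ∀ i : Fin n, T k i (euler f) x = euler (T k i f) x + T k i f x := by
      intro i
      have hET : euler (T k i f) x
          = S (uL x) (Pi.single i.succ 1) + ((k i / x i.succ) • (euler f x - euler f (refl i x))
            - (k i / x i.succ) • (f x - f (refl i x))) := by
        rw [euler_eq_fderiv, (hTi i).fderiv]
        rw [ContinuousLinearMap.add_apply, ContinuousLinearMap.comp_apply,
          ContinuousLinearMap.apply_apply, ContinuousLinearMap.add_apply,
          ContinuousLinearMap.smul_apply, ContinuousLinearMap.sub_apply,
          ContinuousLinearMap.smulRight_apply, ContinuousLinearMap.smul_apply,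
          ContinuousLinearMap.comp_apply, reflL_uL, coordL_apply, uL_coord]
        rw [euler_eq_fderiv f x, euler_eq_fderiv f (refl i x)]
        have hsc : -(k i / x i.succ ^ 2) * x i.succ = -(k i / x i.succ) := by
          field_simp [hnz i]
        rw [smul_eq_mul, hsc]
        module
      rw [T_def, hpdE i, hET, hsymm (Pi.single i.succ 1) (uL x), T_def]
      module
    have hpdT : ∀ j : Fin (n+1), pd j (dunklDirac k f) x
        = ∑ i : Fin n, gen i * (pd j (T k i f) x) := by
      intro j
      have hDD : HasFDerivAt (dunklDirac k f)
          (∑ i : Fin n, ((lmul (gen i)).comp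
            ((ContinuousLinearMap.apply ℝ (Cl n) (Pi.single i.succ 1 : Pt n)).comp S
              + ((k i / x i.succ) • (fderiv ℝ f x - (fderiv ℝ f (refl i x)).comp (reflL i))
                + ((-(k i / x i.succ ^ 2)) • coordL i.succ).smulRight (f x - f (refl i x))))
            + (rmul (T k i f x)).comp 0)) x :=
        HasFDerivAt.fun_sum fun i _ => hasFDerivAt_mul (hasFDerivAt_const (gen i) x) (hTi i)
      rw [pd_eq hDD, ContinuousLinearMap.sum_apply]
      refine Finset.sum_congr rfl fun i _ => ?_
      rw [ContinuousLinearMap.add_apply, ContinuousLinearMap.comp_apply,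
        ContinuousLinearMap.comp_apply, ContinuousLinearMap.zero_apply, map_zero, add_zero,
        lmul_apply, pd_eq (hTi i)]
    have hEDD : euler (dunklDirac k f) x = ∑ i : Fin n, gen i * euler (T k i f) x := by
      rw [euler_apply]
      rw [Finset.sum_congr rfl fun j (_ : j ∈ Finset.univ) => by
        rw [hpdT j.succ, Finset.smul_sum]]
      rw [Finset.sum_comm]
      refine Finset.sum_congr rfl fun i _ => ?_
      rw [euler_apply, Finset.mul_sum]
      exact Finset.sum_congr rfl fun j _ => by rw [mul_smul_comm]
    have hLHS : dunklDirac k (euler f) x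
        = (∑ i : Fin n, gen i * euler (T k i f) x) + ∑ i : Fin n, gen i * T k i f x := by
      rw [dunklDirac_apply, ← Finset.sum_add_distrib]
      exact Finset.sum_congr rfl fun i _ => by rw [key2 i, mul_add]
    rw [hLHS, hEDD, dunklDirac_apply]
    abel
  · -- Statement (3)
    have himfT : ∀ (i : Fin n), ∀ y ∈ Ω ∩ {z : Pt n | allNZ z},
        T k i (fun z => im z * f z) y
          = gen i * f y + im y * T k i f y + (2 * k i) • (gen i * f (refl i y)) :=
      fun i y hy => T_mul_im (hy.2 i) (hdiff y hy.1)
    have hTT : ∀ i : Fin n, T k i (T k i (fun z => im z * f z)) x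
        = (2:ℝ) • (gen i * T k i f x) + im x * T k i (T k i f) x := by
      intro i
      have hev : (T k i (fun z => im z * f z)) =ᶠ[nhds x]
          (fun y => gen i * f y + im y * T k i f y + (2 * k i) • (gen i * f (refl i y))) :=
        Filter.eventuallyEq_of_mem (hUopen.mem_nhds hxU) (fun y hy => himfT i y hy)
      rw [T_congr_nhds hev (himfT i (refl i x) (hUrefl i x hxU))]
      have da : DifferentiableAt ℝ (fun y => gen i * f y) x :=
        (hasFDerivAt_mul (hasFDerivAt_const (gen i) x) (hdiff x hx).hasFDerivAt).differentiableAt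
      have hTdi : DifferentiableAt ℝ (T k i f) x := (hTi i).differentiableAt
      have db : DifferentiableAt ℝ (fun y => im y * T k i f y) x :=
        (hasFDerivAt_mul (hasFDerivAt_im x) hTdi.hasFDerivAt).differentiableAt
      have dcc : DifferentiableAt ℝ (fun y => gen i * f (refl i y)) x :=
        (hasFDerivAt_mul (hasFDerivAt_const (gen i) x)
          (hasFDerivAt_refl_comp (hdiff _ (hrx i)).hasFDerivAt)).differentiableAt
      have dc : DifferentiableAt ℝ (fun y => (2 * k i) • (gen i * f (refl i y))) x :=
        dcc.const_smul (2 * k i)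
      rw [T_add (da.fun_add db) dc, T_add da db, T_constMul (gen i) (hdiff x hx),
        T_mul_im (hnz i) hTdi,
        T_constSmul (2 * k i) dcc,
        T_constMul (gen i)
          ((hasFDerivAt_refl_comp (hdiff _ (hrx i)).hasFDerivAt).differentiableAt),
        T_refl_comp (hnz i) (hdiff _ (hrx i))]
      rw [mul_neg, smul_neg, two_smul]
      module
    have hLap : dunklLap k (fun y => im y * f y) x
        = (2:ℝ) • dunklDirac k f x + im x * dunklLap k f x := by
      rw [dunklLap_apply]
      rw [Finset.sum_congr rfl fun i _ => hTT i, Finset.sum_add_distrib]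
      rw [← Finset.smul_sum, ← Finset.mul_sum, ← dunklDirac_apply, ← dunklLap_apply]
    rw [hLap]
    abel
  · -- Statement (4)
    have h1 : dunklDirac k (fun y => normSqIm y • f y) x
        = ∑ i : Fin n, ((2 * x i.succ) • (gen i * f x) + normSqIm x • (gen i * T k i f x)) := by
      rw [dunklDirac_apply]
      refine Finset.sum_congr rfl fun i _ => ?_
      rw [T_sq (hdiff x hx), mul_add, mul_smul_comm, mul_smul_comm]
    rw [h1, Finset.sum_add_distrib]
    have h2 : ∑ i : Fin n, (2 * x i.succ) • (gen i * f x) = (2:ℝ) • (im x * f x) := by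
      rw [im, Finset.sum_mul, Finset.smul_sum]
      refine Finset.sum_congr rfl fun i _ => ?_
      rw [smul_mul_assoc, smul_smul]
    have h3 : ∑ i : Fin n, normSqIm x • (gen i * T k i f x) = normSqIm x • dunklDirac k f x := by
      rw [dunklDirac_apply, Finset.smul_sum]
    rw [h2, h3]
    abel
end
end
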